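/- arXiv:1603.04879 — 6 statements merged into one kernel-verified Lean document; each statement's English description precedes it below -/
import Mathlib

section
/- Let G be a finite p-group with an abelian maximal subgroup A, and suppose G is nonabelian. Then for every g ∈ G \ A, the derived subgroup G' equals the set {[g,a] : a ∈ A}, and consequently |G'| = |A : C_A(g)|. -/
open scoped commutatorElement

/-!
A maximal subgroup of a nilpotent group is normal, and `G` is generated by `A` and `g`. Because `A`
is abelian and normal, `a ↦ ⁅g, a⁆` is a homomorphism `A →* G` with kernel `C_A(g)`. Its image `K`
lies in `A`, so it is normalized by `A`, and conjugation by `g` permutes it; hence `K` is normal.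
Modulo `K` any two of the generators `A ∪ {g}` commute, so `G' ≤ K ≤ G'`.
-/

namespace Subgroup

variable {G : Type*} [Group G]

theorem isCoatom_of_index_prime {H : Subgroup G} (hH : H.index.Prime) : IsCoatom H := by
  refine ⟨fun h => hH.ne_one (index_eq_one.mpr h), fun K hHK => ?_⟩
  have hmul : H.relIndex K * K.index = H.index := relIndex_mul_index hHK.le
  rcases hH.eq_one_or_self_of_dvd K.index (Dvd.intro_left _ hmul) with hK | hK
  · exact index_eq_one.mp hK
  · rw [hK, Nat.mul_eq_right hH.ne_zero, relIndex_eq_one] at hmul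
    exact absurd hmul (not_le_of_gt hHK)

theorem closure_insert_eq_top_of_isCoatom {H : Subgroup G} (hH : IsCoatom H) {g : G}
    (hg : g ∉ H) : closure (insert g (H : Set G)) = ⊤ := by
  refine hH.2 _ (lt_of_le_of_ne (fun x hx => subset_closure (Set.mem_insert_of_mem g hx)) ?_)
  intro h
  exact hg (h ▸ subset_closure (Set.mem_insert g _))

theorem commutator_le_of_closure_eq_top {N : Subgroup G} [N.Normal] {s : Set G}
    (hs : closure s = ⊤) (hN : ∀ x ∈ s, ∀ y ∈ s, ⁅x, y⁆ ∈ N) : _root_.commutator G ≤ N := by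
  let π := QuotientGroup.mk' N
  have hπs : closure (π '' s) = ⊤ := by
    rw [← MonoidHom.map_closure, hs, ← MonoidHom.range_eq_map, MonoidHom.range_eq_top]
    exact QuotientGroup.mk'_surjective N
  have hπ_comm (x y : G) : π x * π y = π y * π x ↔ ⁅x, y⁆ ∈ N := by
    rw [← commutatorElement_eq_one_iff_mul_comm, ← map_commutatorElement,
      QuotientGroup.mk'_apply, QuotientGroup.eq_one_iff]
  have : IsMulCommutative (⊤ : Subgroup (G ⧸ N)) := hπs ▸ isMulCommutative_closure <| by
    rintro _ ⟨x, hx, rfl⟩ _ ⟨y, hy, rfl⟩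
    exact (hπ_comm x y).mpr (hN x hx y hy)
  rw [_root_.commutator_def, commutator_le]
  exact fun x _ y _ =>
    (hπ_comm x y).mp (setLike_mul_comm (s := (⊤ : Subgroup (G ⧸ N))) trivial trivial)

end Subgroup

open Subgroup

section CommutatorHom

variable {G : Type*} [Group G] (A : Subgroup G) [IsMulCommutative A] [A.Normal] (g : G)

omit [IsMulCommutative A] in
theorem commutatorElement_mem_of_normal {a : G} (ha : a ∈ A) : ⁅g, a⁆ ∈ A :=
  A.mul_mem (‹A.Normal›.conj_mem a ha g) (A.inv_mem ha)

def commutatorHom : A →* G where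
  toFun a := ⁅g, (a : G)⁆
  map_one' := commutatorElement_one_right g
  map_mul' a b := by
    have hcomm : ⁅g, (b : G)⁆ * (a : G)⁻¹ = (a : G)⁻¹ * ⁅g, (b : G)⁆ :=
      setLike_mul_comm (commutatorElement_mem_of_normal A g b.2) (A.inv_mem a.2)
    calc ⁅g, ((a * b : A) : G)⁆ = g * a * g⁻¹ * (⁅g, (b : G)⁆ * (a : G)⁻¹) := by
          simp only [coe_mul, commutatorElement_def]; group
      _ = ⁅g, (a : G)⁆ * ⁅g, (b : G)⁆ := by
          rw [hcomm]; simp only [commutatorElement_def]; group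

@[simp]
theorem commutatorHom_apply (a : A) : commutatorHom A g a = ⁅g, (a : G)⁆ := rfl

theorem ker_commutatorHom : (commutatorHom A g).ker = (centralizer {g}).subgroupOf A := by
  ext a
  rw [MonoidHom.mem_ker, mem_subgroupOf, mem_centralizer_singleton_iff, commutatorHom_apply,
    commutatorElement_eq_one_iff_mul_comm, eq_comm]

theorem range_commutatorHom_le : (commutatorHom A g).range ≤ A := by
  rintro _ ⟨a, rfl⟩
  exact commutatorElement_mem_of_normal A g a.2

theorem range_commutatorHom_normal (hgen : closure (insert g (A : Set G)) = ⊤) :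
    (commutatorHom A g).range.Normal := by
  set K := (commutatorHom A g).range
  have hA_normalizer : A ≤ normalizer (K : Set G) := by
    intro x hx h
    have hfix {h : G} (hh : h ∈ A) : x * h * x⁻¹ = h := by
      rw [setLike_mul_comm hx hh, mul_inv_cancel_right]
    have hconj_mem : x * h * x⁻¹ ∈ A ↔ h ∈ A := by
      rw [A.mul_mem_cancel_right (A.inv_mem hx), A.mul_mem_cancel_left hx]
    constructor
    · intro hh
      rwa [hfix (range_commutatorHom_le A g hh)]
    · intro hh
      rwa [hfix (hconj_mem.mp (range_commutatorHom_le A g hh))] at hh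
  have hg_mem : g ∈ normalizer (K : Set G) := by
    intro h
    constructor
    · rintro ⟨a, rfl⟩
      refine ⟨⟨g * a * g⁻¹, ‹A.Normal›.conj_mem a a.2 g⟩, ?_⟩
      simp only [commutatorHom_apply, commutatorElement_def]
      group
    · rintro ⟨a, ha⟩
      refine ⟨⟨g⁻¹ * a * g, by simpa using ‹A.Normal›.conj_mem a a.2 g⁻¹⟩, ?_⟩
      have h_eq : h = g⁻¹ * (g * h * g⁻¹) * g := by group
      rw [h_eq, ← ha]
      simp only [commutatorHom_apply, commutatorElement_def]
      group
  rw [← normalizer_eq_top_iff, ← top_le_iff, ← hgen, closure_le]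
  exact Set.insert_subset hg_mem hA_normalizer

theorem commutator_eq_range_commutatorHom (hgen : closure (insert g (A : Set G)) = ⊤) :
    commutator G = (commutatorHom A g).range := by
  have := range_commutatorHom_normal A g hgen
  refine le_antisymm (commutator_le_of_closure_eq_top hgen ?_) ?_
  · have hAA {a b : G} (ha : a ∈ A) (hb : b ∈ A) : ⁅a, b⁆ = 1 :=
      commutatorElement_eq_one_iff_mul_comm.mpr (setLike_mul_comm ha hb)
    rintro x (rfl | hx) y (rfl | hy)
    · rw [commutatorElement_self]; exact one_mem _
    · exact ⟨⟨y, hy⟩, rfl⟩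
    · rw [← commutatorElement_inv]; exact inv_mem ⟨⟨x, hx⟩, rfl⟩
    · rw [hAA hx hy]; exact one_mem _
  · rintro _ ⟨a, rfl⟩
    exact commutator_mem_commutator (mem_top g) (mem_top (a : G))

end CommutatorHom

theorem stmt0_general {p : ℕ} (hp : p.Prime) {G : Type} [Group G] [Finite G]
    (hG : IsPGroup p G) (A : Subgroup G) (hA : IsMulCommutative A) (hAmax : A.index = p)
    (g : G) (hg : g ∉ A) :
    ((commutator G : Subgroup G) : Set G) = {x : G | ∃ a ∈ A, x = ⁅g, a⁆} ∧
      Nat.card (commutator G) = (Subgroup.centralizer {g}).relIndex A := by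
  have : Fact p.Prime := ⟨hp⟩
  have hcoatom : IsCoatom A := isCoatom_of_index_prime (hAmax ▸ hp)
  have : Group.IsNilpotent G := hG.isNilpotent
  have : A.Normal := Group.normalizerCondition_of_isNilpotent.normal_of_coatom A hcoatom
  have hG' := commutator_eq_range_commutatorHom A g (closure_insert_eq_top_of_isCoatom hcoatom hg)
  refine ⟨?_, ?_⟩
  · rw [hG']
    ext x
    simp [eq_comm]
  · rw [hG', relIndex, ← ker_commutatorHom, index_ker]

theorem stmt0 {p : ℕ} (hp : p.Prime) {G : Type} [Group G] [Finite G]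
    (hG : IsPGroup p G) (A : Subgroup G) (hA : IsMulCommutative A) (hAmax : A.index = p)
    (hnab : ∃ x y : G, x * y ≠ y * x) (g : G) (hg : g ∉ A) :
    ((commutator G : Subgroup G) : Set G) = {x : G | ∃ a ∈ A, x = ⁅g, a⁆} ∧
      Nat.card (commutator G) = (Subgroup.centralizer {g}).relIndex A :=
  stmt0_general hp hG A hA hAmax g hg
end

section
/- Let G be a finite p-group with an abelian maximal subgroup, let H be a maximal subgroup of G, and let φ : H → G be a simple virtual endomorphism (the only φ-invariant subgroup of H normal in G is trivial). Then H is abelian. -/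
/-- A virtual endomorphism `φ : H → G` is *simple* if the only subgroup of `H`
which is normal in `G` and `φ`-invariant is the trivial subgroup. -/
def IsSimpleVirtualEndo {G : Type*} [Group G] (H : Subgroup G) (φ : H →* G) : Prop :=
  ∀ K : Subgroup G, K ≤ H → K.Normal → Subgroup.map φ (K.subgroupOf H) ≤ K → K = ⊥

/-!
Write `R = φ(H)`. Since `[H, H]` is normal in `G` and `φ([H, H]) = [R, R]`, simplicity makes `H`
abelian as soon as `[R, R] ≤ [H, H]`. If `Z(G) ⊄ H`, then `G = H Z(G)`, so
`[R, R] ≤ [G, G] = [H, H]`. If `Z(G) ≤ H` and `R` is not abelian, use that the centralizer of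
an element outside the abelian maximal subgroup `A` is abelian: an element commuting with all of
`R` must then lie in `A` and commute with some element of `R \ A`, hence is central in `G`. As
`φ(Z(G))` commutes with `φ(H) = R`, the normal subgroup `Z(G) ≤ H` is `φ`-invariant, so it is
trivial, which is impossible in the nontrivial `p`-group `G`.
-/

open scoped commutatorElement

namespace Subgroup

variable {G : Type*} [Group G]

theorem isCoatom_of_index_eq_prime {p : ℕ} (hp : p.Prime) {H : Subgroup G} (hH : H.index = p) :
    IsCoatom H := by
  refine ⟨fun h => hp.ne_one (by rw [← hH, h, index_top]), fun K hK => ?_⟩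
  have hmul := relIndex_mul_index hK.le
  rw [hH] at hmul
  rcases hp.eq_one_or_self_of_dvd _ (Dvd.intro_left _ hmul) with h | h
  · exact index_eq_one.mp h
  · rw [h, Nat.mul_eq_right hp.ne_zero] at hmul
    exact absurd (relIndex_eq_one.mp hmul) hK.not_ge

theorem exists_mem_mul_zpow_eq_of_isCoatom {M : Subgroup G} [M.Normal] (hM : IsCoatom M)
    {c : G} (hc : c ∉ M) (g : G) : ∃ m ∈ M, ∃ k : ℤ, m * c ^ k = g := by
  have hsup : M ⊔ zpowers c = ⊤ :=
    codisjoint_iff.mp (hM.not_le_iff_codisjoint.mp (by rwa [zpowers_le]))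
  obtain ⟨m, hm, _, ⟨k, rfl⟩, rfl⟩ := mem_sup_of_normal_left.mp (hsup ▸ mem_top g)
  exact ⟨m, hm, k, rfl⟩

theorem commutator_top_le_of_sup_center_eq_top {H : Subgroup G} (h : H ⊔ center G = ⊤) :
    ⁅(⊤ : Subgroup G), ⊤⁆ ≤ ⁅H, H⁆ := by
  have mul_center : ∀ {a z : G}, z ∈ center G → ∀ b : G, ⁅a * z, b⁆ = ⁅a, b⁆ := by
    intro a z hz b
    rw [commutatorElement_def, commutatorElement_def, mul_inv_rev, mul_assoc a z b,
      (mem_center_iff.mp hz b).symm]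
    group
  rw [commutator_le]
  intro g₁ _ g₂ _
  obtain ⟨h₁, hh₁, z₁, hz₁, rfl⟩ := mem_sup_of_normal_right.mp (h ▸ mem_top g₁)
  obtain ⟨h₂, hh₂, z₂, hz₂, rfl⟩ := mem_sup_of_normal_right.mp (h ▸ mem_top g₂)
  rw [mul_center hz₁, ← commutatorElement_inv, mul_center hz₂, commutatorElement_inv]
  exact commutator_mem_commutator hh₁ hh₂

section AbelianCoatom

variable {A : Subgroup G} [A.Normal] [IsMulCommutative A] (hA : IsCoatom A)
include hA

theorem commute_of_commute_of_notMem {c u v : G} (hc : c ∉ A) (hu : Commute u c)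
    (hv : Commute v c) : Commute u v := by
  obtain ⟨a, ha, k, rfl⟩ := exists_mem_mul_zpow_eq_of_isCoatom hA hc u
  obtain ⟨b, hb, l, rfl⟩ := exists_mem_mul_zpow_eq_of_isCoatom hA hc v
  have hac : Commute a c := by simpa using hu.mul_left ((Commute.refl c).zpow_left k).inv_left
  have hbc : Commute b c := by simpa using hv.mul_left ((Commute.refl c).zpow_left l).inv_left
  have hab : Commute a b := setLike_mul_comm ha hb
  exact (hab.mul_right (hac.zpow_right l)).mul_left
    ((hbc.symm.zpow_left k).mul_right ((Commute.refl c).zpow_zpow k l))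

theorem mem_center_of_commute_of_notMem {w c : G} (hw : w ∈ A) (hc : c ∉ A)
    (hwc : Commute w c) : w ∈ center G := by
  refine mem_center_iff.mpr fun g => ?_
  obtain ⟨a, ha, k, rfl⟩ := exists_mem_mul_zpow_eq_of_isCoatom hA hc g
  exact ((show Commute w a from setLike_mul_comm hw ha).mul_right (hwc.zpow_right k)).symm.eq

theorem mem_center_of_forall_commute {R : Subgroup G} (hR : ¬IsMulCommutative R) {w : G}
    (hwR : ∀ x ∈ R, Commute w x) : w ∈ center G := by
  have hwA : w ∈ A := by
    by_contra hwA
    exact hR (isMulCommutative_iff_of_setLike.mpr fun x hx y hy =>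
      commute_of_commute_of_notMem hA hwA (hwR x hx).symm (hwR y hy).symm)
  obtain ⟨r, hr, hrA⟩ := SetLike.not_le_iff_exists.mp fun hRA : R ≤ A =>
    hR (isMulCommutative_iff_of_setLike.mpr fun x hx y hy => setLike_mul_comm (hRA hx) (hRA hy))
  exact mem_center_of_commute_of_notMem hA hwA hrA (hwR r hr)

end AbelianCoatom

end Subgroup

theorem IsPGroup.normal_of_isCoatom {p : ℕ} [Fact p.Prime] {G : Type*} [Group G] [Finite G]
    (hG : IsPGroup p G) {H : Subgroup G} (hH : IsCoatom H) : H.Normal := by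
  have tfae := (Group.isNilpotent_of_finite_tfae (G := G)).out 0 2
  exact tfae.mp hG.isNilpotent H hH

namespace IsSimpleVirtualEndo

variable {G : Type*} [Group G] {H : Subgroup G} {φ : H →* G}

theorem isMulCommutative_of_commutator_range_le [H.Normal] (hφ : IsSimpleVirtualEndo H φ)
    (h : ⁅φ.range, φ.range⁆ ≤ ⁅H, H⁆) : IsMulCommutative H := by
  have hsub : (⁅H, H⁆).subgroupOf H = commutator H := by
    rw [← H.map_subtype_commutator]
    exact Subgroup.comap_map_eq_self_of_injective H.subtype_injective _
  have hinv : ((⁅H, H⁆).subgroupOf H).map φ ≤ ⁅H, H⁆ := by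
    rwa [hsub, map_commutator_eq]
  exact Subgroup.commutator_self_eq_bot_iff.mp
    (hφ _ (Subgroup.commutator_le_self H) inferInstance hinv)

end IsSimpleVirtualEndo

theorem stmt4 {p : ℕ} (hp : p.Prime) {G : Type} [Group G] [Finite G]
    (hG : IsPGroup p G) (A : Subgroup G) (hA : IsMulCommutative A) (hAmax : A.index = p)
    (H : Subgroup G) (hHmax : H.index = p)
    (φ : H →* G) (hφ : IsSimpleVirtualEndo H φ) :
    IsMulCommutative H := by
  have : Fact p.Prime := ⟨hp⟩
  have hAc := Subgroup.isCoatom_of_index_eq_prime hp hAmax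
  have hHc := Subgroup.isCoatom_of_index_eq_prime hp hHmax
  have := hG.normal_of_isCoatom hAc
  have := hG.normal_of_isCoatom hHc
  refine hφ.isMulCommutative_of_commutator_range_le ?_
  by_cases hZH : Subgroup.center G ≤ H
  · suffices IsMulCommutative φ.range by
      rw [Subgroup.commutator_self_eq_bot_iff.mpr this]
      exact bot_le
    by_contra hR
    have hinv : ((Subgroup.center G).subgroupOf H).map φ ≤ Subgroup.center G := by
      rintro _ ⟨z, hz, rfl⟩
      refine Subgroup.mem_center_of_forall_commute hAc hR ?_
      rintro _ ⟨h, rfl⟩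
      exact (show Commute z h from Subtype.ext (Subgroup.mem_center_iff.mp hz h).symm).map φ
    have : Nontrivial G := by
      by_contra hG1
      rw [not_nontrivial_iff_subsingleton] at hG1
      exact hHc.ne_top (Subsingleton.elim _ _)
    exact (Subgroup.nontrivial_iff_ne_bot _).mp hG.center_nontrivial
      (hφ _ hZH inferInstance hinv)
  · exact (Subgroup.commutator_mono le_top le_top).trans
      (Subgroup.commutator_top_le_of_sup_center_eq_top
        (codisjoint_iff.mp (hHc.not_le_iff_codisjoint.mp hZH)))
end

section
/- Let G be a finite p-group of maximal class of order p^n ≥ p^4, and let K ≤ G be a subgroup of order p^{n−t} containing a uniform element s. Then K = ⟨s, γ_{t+1}(G)⟩. -/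
/-!
In a group of maximal class every layer `γ i / γ (i + 1)` with `1 ≤ i ≤ n - 2` has order
`p`, and `G / γ 1` has order `p²` (it is not cyclic, since `γ 1 ≠ γ 2`). The elements
commuting with a uniform `s` modulo `γ (i + 2)` form a subgroup of order at most
`|γ (i + 2)| · |C_G(s)| = |γ i|`, so it cannot contain `⟨s, γ i⟩`; hence
`[x, s] ∈ γ (i + 1) \ γ (i + 2)` whenever `x ∈ γ i \ γ (i + 1)`. So once `K ∋ s` meets a layer
`γ j \ γ (j + 1)` it meets all later layers, and then it contains `γ j`. The order of `K` makes
`γ t` the first layer it meets: if `K ∩ γ t ⊆ γ (t + 1)`, then `K ∩ γ 1 ⊆ γ (t + 1)`, so `K γ 1`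
has order `p ^ n` and yet commutes with `s` modulo `γ 2`. Finally `⟨s⟩ γ t ≤ K`, and
`⟨s⟩ γ t` has order at least `p ^ (n - t) = |K|`.
-/

open Subgroup
open scoped commutatorElement

theorem inf_le_of_forall_inf_le_succ {α : Type*} [Lattice α] {f : ℕ → α} {k : α} {a b : ℕ}
    (hab : a ≤ b) (h : ∀ j, a ≤ j → j < b → k ⊓ f j ≤ f (j + 1)) : k ⊓ f a ≤ f b := by
  induction b, hab using Nat.le_induction with
  | base => exact inf_le_right
  | succ b hab ih =>
    exact (le_inf inf_le_left (ih fun j hj _ => h j hj (by omega))).trans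
      (h b hab b.lt_succ_self)

theorem commutatorElement_eq_commutatorElement_iff {G : Type*} [Group G] {a b s : G} :
    ⁅a, s⁆ = ⁅b, s⁆ ↔ a⁻¹ * b ∈ centralizer {s} := by
  rw [commutatorElement_def, commutatorElement_def, mul_left_inj,
    mem_centralizer_singleton_iff]
  constructor
  · intro h
    calc a⁻¹ * b * s = a⁻¹ * (b * s * b⁻¹) * b := by group
      _ = s * (a⁻¹ * b) := by rw [← h]; group
  · intro h
    calc a * s * a⁻¹ = a * (s * (a⁻¹ * b)) * b⁻¹ := by group
      _ = b * s * b⁻¹ := by rw [← h]; group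

namespace Subgroup

variable {G : Type*} [Group G]

theorem card_mul_relIndex {H K : Subgroup G} (h : H ≤ K) :
    Nat.card H * H.relIndex K = Nat.card K := by
  rw [← relIndex_bot_left, ← relIndex_bot_left, relIndex_mul_relIndex _ _ _ bot_le h]

theorem card_sup_mul_card_inf (H N : Subgroup G) [N.Normal] :
    Nat.card ↥(H ⊔ N) * Nat.card ↥(H ⊓ N) = Nat.card H * Nat.card N := by
  rw [← card_mul_relIndex (le_sup_right : N ≤ H ⊔ N),
    ← card_mul_relIndex (inf_le_left : H ⊓ N ≤ H), relIndex_sup_right, inf_comm,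
    inf_relIndex_right]
  ring

def centralizerModulo (N : Subgroup G) [N.Normal] (s : G) : Subgroup G :=
  (centralizer {(s : G ⧸ N)}).comap (QuotientGroup.mk' N)

theorem mem_centralizerModulo {N : Subgroup G} [N.Normal] {s g : G} :
    g ∈ centralizerModulo N s ↔ ⁅g, s⁆ ∈ N := by
  rw [centralizerModulo, mem_comap, mem_centralizer_singleton_iff,
    ← commutatorElement_eq_one_iff_mul_comm, ← QuotientGroup.mk'_apply N s,
    ← map_commutatorElement, QuotientGroup.mk'_apply, QuotientGroup.eq_one_iff]

theorem self_mem_centralizerModulo (N : Subgroup G) [N.Normal] (s : G) :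
    s ∈ centralizerModulo N s :=
  mem_centralizerModulo.mpr (by rw [commutatorElement_self]; exact one_mem N)

theorem card_centralizerModulo_le [Finite G] (N : Subgroup G) [N.Normal] (s : G) :
    Nat.card (centralizerModulo N s) ≤ Nat.card N * Nat.card (centralizer {s}) := by
  set C := centralizerModulo N s
  let f : C ⧸ (centralizer {s}).subgroupOf C → N :=
    Quotient.lift (fun g => ⟨⁅(g : G), s⁆, mem_centralizerModulo.mp g.2⟩) fun _ _ hab =>
      Subtype.ext (commutatorElement_eq_commutatorElement_iff.mpr
        (mem_subgroupOf.mp (QuotientGroup.leftRel_apply.mp hab)))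
  have hf : Function.Injective f := by
    rintro ⟨a⟩ ⟨b⟩ hab
    exact QuotientGroup.eq.mpr (mem_subgroupOf.mpr
      (commutatorElement_eq_commutatorElement_iff.mp (congrArg Subtype.val hab)))
  rw [← card_mul_relIndex (inf_le_right : centralizer {s} ⊓ C ≤ C), inf_relIndex_right,
    mul_comm]
  exact Nat.mul_le_mul (Nat.card_le_card_of_injective f hf) (card_le_of_le inf_le_left)

local notation "γ" => lowerCentralSeries (⊤ : Subgroup G)

theorem commutatorElement_mem_lowerCentralSeries_succ {x : G} {i : ℕ} (hx : x ∈ γ i)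
    (g : G) : ⁅x, g⁆ ∈ γ (i + 1) :=
  commutator_mem_commutator hx (mem_top g)

theorem lowerCentralSeries_le_centralizerModulo (i : ℕ) (s : G) :
    γ i ≤ centralizerModulo (γ (i + 1)) s := fun _ hx =>
  mem_centralizerModulo.mpr (commutatorElement_mem_lowerCentralSeries_succ hx s)

theorem lowerCentralSeries_add_eq_of_succ_eq {i : ℕ} (h : γ (i + 1) = γ i) (k : ℕ) :
    γ (i + k) = γ i := by
  induction k with
  | zero => rfl
  | succ k ih => rw [← add_assoc, lowerCentralSeries_succ, ih, ← lowerCentralSeries_succ, h]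

theorem lowerCentralSeries_succ_lt {c i j : ℕ} (hc : γ c = ⊥) (hj : γ j ≠ ⊥) (hij : i ≤ j) :
    γ (i + 1) < γ i := by
  refine lt_of_le_of_ne (lowerCentralSeries_antitone ⊤ i.le_succ) fun h =>
    hj (eq_bot_iff.mpr ?_)
  calc γ j ≤ γ i := lowerCentralSeries_antitone ⊤ hij
    _ = γ (i + c) := (lowerCentralSeries_add_eq_of_succ_eq h c).symm
    _ ≤ γ c := lowerCentralSeries_antitone ⊤ (by omega)
    _ = ⊥ := hc

theorem lowerCentralSeries_one_le_two_of_isCyclic [IsCyclic (G ⧸ γ 1)] : γ 1 ≤ γ 2 := by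
  let f : G ⧸ γ 2 →* G ⧸ γ 1 :=
    QuotientGroup.map _ _ (MonoidHom.id G) (lowerCentralSeries_antitone ⊤ one_le_two)
  have hf : f.ker ≤ center (G ⧸ γ 2) := by
    intro q hq
    obtain ⟨g, rfl⟩ := QuotientGroup.mk_surjective q
    refine mem_center_iff.mpr fun q' => ?_
    obtain ⟨h, rfl⟩ := QuotientGroup.mk_surjective q'
    exact (mem_centralizer_singleton_iff.mp
      (lowerCentralSeries_le_centralizerModulo 1 h ((QuotientGroup.eq_one_iff g).mp hq))).symm
  exact Normal.quotient_commutative_iff_commutator_le.mp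
    (f.isMulCommutative_of_isCyclic_of_ker_le_center hf)

end Subgroup

namespace IsPGroup

variable {G : Type*} [Group G] [Finite G] {p : ℕ} [Fact p.Prime]

theorem mul_card_le_card_of_lt (hG : IsPGroup p G) {H K : Subgroup G} (h : H < K) :
    p * Nat.card H ≤ Nat.card K := by
  obtain ⟨k, hk⟩ := (hG.to_subgroup K).index (H.subgroupOf K)
  have hk0 : k ≠ 0 := by
    rintro rfl
    exact h.not_ge (relIndex_eq_one.mp (by rwa [pow_zero] at hk))
  rw [← card_mul_relIndex h.le, relIndex, hk, mul_comm]
  exact Nat.mul_le_mul_left _ (Nat.le_self_pow hk0 p)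

theorem eq_of_lt_of_le (hG : IsPGroup p G) {H D K : Subgroup G} (hHD : H < D) (hDK : D ≤ K)
    (hK : Nat.card K ≤ p * Nat.card H) : D = K :=
  eq_of_le_of_card_ge hDK (hK.trans (hG.mul_card_le_card_of_lt hHD))

theorem pow_mul_card_le_card_of_lt (hG : IsPGroup p G) {H : ℕ → Subgroup G} {a b : ℕ}
    (hab : a ≤ b) (h : ∀ i, a ≤ i → i < b → H (i + 1) < H i) :
    p ^ (b - a) * Nat.card (H b) ≤ Nat.card (H a) := by
  induction b, hab using Nat.le_induction with
  | base => rw [Nat.sub_self, pow_zero, one_mul]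
  | succ b hab ih =>
    calc p ^ (b + 1 - a) * Nat.card (H (b + 1))
        = p ^ (b - a) * (p * Nat.card (H (b + 1))) := by
          rw [Nat.sub_add_comm hab, pow_succ, mul_assoc]
      _ ≤ p ^ (b - a) * Nat.card (H b) :=
          Nat.mul_le_mul_left _ (hG.mul_card_le_card_of_lt (h b hab b.lt_succ_self))
      _ ≤ Nat.card (H a) := ih fun i hi _ => h i hi (by omega)

theorem eq_closure_sup_of_card_le (hG : IsPGroup p G) {H K : Subgroup G} {s : G} (hHK : H ≤ K)
    (hsK : s ∈ K) (hsH : s ∉ H) (hK : Nat.card K ≤ p * Nat.card H) :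
    K = closure {s} ⊔ H := by
  have hs : s ∈ closure {s} ⊔ H := mem_sup_left (subset_closure rfl)
  refine (hG.eq_of_lt_of_le (lt_of_le_of_ne le_sup_right fun h => hsH (by rwa [h])) ?_ hK).symm
  exact sup_le ((closure_le K).mpr (Set.singleton_subset_iff.mpr hsK)) hHK

end IsPGroup

structure IsMaximalClass (p n : ℕ) (G : Type*) [Group G] : Prop where
  card_eq : Nat.card G = p ^ n
  lowerCentralSeries_eq_bot : (⊤ : Subgroup G).lowerCentralSeries (n - 1) = ⊥
  lowerCentralSeries_ne_bot : (⊤ : Subgroup G).lowerCentralSeries (n - 2) ≠ ⊥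

namespace IsMaximalClass

variable {G : Type*} [Group G] {p n : ℕ}

local notation "γ" => Subgroup.lowerCentralSeries (⊤ : Subgroup G)

theorem isPGroup (hG : IsMaximalClass p n G) : IsPGroup p G :=
  IsPGroup.of_card hG.card_eq

theorem lowerCentralSeries_succ_lt (hG : IsMaximalClass p n G) {i : ℕ} (hi : i ≤ n - 2) :
    γ (i + 1) < γ i :=
  Subgroup.lowerCentralSeries_succ_lt hG.lowerCentralSeries_eq_bot
    hG.lowerCentralSeries_ne_bot hi

variable [Finite G] [hp : Fact p.Prime]

theorem card_lowerCentralSeries_one_le (hG : IsMaximalClass p n G) (hn : 3 ≤ n) :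
    Nat.card (γ 1) ≤ p ^ (n - 2) := by
  obtain ⟨k, hk⟩ := hG.isPGroup.index (γ 1)
  have hk0 : k ≠ 0 := by
    rintro rfl
    exact (hG.lowerCentralSeries_succ_lt (i := 0) (by omega)).ne (index_eq_one.mp hk)
  have hk1 : k ≠ 1 := by
    rintro rfl
    have : IsCyclic (G ⧸ γ 1) :=
      isCyclic_of_prime_card (by rw [← index_eq_card, hk, pow_one])
    exact (hG.lowerCentralSeries_succ_lt (i := 1) (by omega)).not_ge
      lowerCentralSeries_one_le_two_of_isCyclic
  have h := (γ 1).card_mul_index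
  rw [hk, hG.card_eq] at h
  refine Nat.le_of_mul_le_mul_right (c := p ^ 2) ?_ (pow_pos hp.out.pos 2)
  calc Nat.card (γ 1) * p ^ 2 ≤ Nat.card (γ 1) * p ^ k :=
        Nat.mul_le_mul_left _ (Nat.pow_le_pow_right hp.out.pos (by omega))
    _ = p ^ (n - 2) * p ^ 2 := by rw [h, ← pow_add, Nat.sub_add_cancel (by omega)]

-- For `i ≥ n - 1` both sides are `1`, the exponent being a truncated subtraction.
theorem card_lowerCentralSeries (hG : IsMaximalClass p n G) {i : ℕ} (hi : 1 ≤ i) :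
    Nat.card (γ i) = p ^ (n - 1 - i) := by
  rcases le_or_gt (n - 1) i with hni | hin
  · have hbot : γ i = ⊥ :=
      le_bot_iff.mp (hG.lowerCentralSeries_eq_bot ▸ Subgroup.lowerCentralSeries_antitone ⊤ hni)
    rw [hbot, card_bot, Nat.sub_eq_zero_of_le hni, pow_zero]
  have lower := hG.isPGroup.pow_mul_card_le_card_of_lt hin.le fun j _ hj =>
    hG.lowerCentralSeries_succ_lt (i := j) (by omega)
  rw [hG.lowerCentralSeries_eq_bot, card_bot, mul_one] at lower
  have upper := hG.isPGroup.pow_mul_card_le_card_of_lt hi fun j _ hj =>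
    hG.lowerCentralSeries_succ_lt (i := j) (by omega)
  refine le_antisymm ?_ lower
  refine Nat.le_of_mul_le_mul_left (c := p ^ (i - 1)) ?_ (pow_pos hp.out.pos _)
  calc p ^ (i - 1) * Nat.card (γ i) ≤ p ^ (n - 2) :=
        upper.trans (hG.card_lowerCentralSeries_one_le (by omega))
    _ = p ^ (i - 1) * p ^ (n - 1 - i) := by rw [← pow_add]; congr 1; omega

theorem notMem_lowerCentralSeries_one (hG : IsMaximalClass p n G) (hn : 3 ≤ n) {s : G}
    (hs : Nat.card (centralizer {s}) = p ^ 2) : s ∉ γ 1 := by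
  intro hs1
  have htop : centralizerModulo (γ 2) s = ⊤ := eq_top_iff.mpr fun g _ =>
    mem_centralizerModulo.mpr (by
      rw [← commutatorElement_inv]
      exact inv_mem (commutatorElement_mem_lowerCentralSeries_succ hs1 g))
  have h := card_centralizerModulo_le (γ 2) s
  rw [htop, card_top, hG.card_eq, hs, hG.card_lowerCentralSeries one_le_two, ← pow_add,
    Nat.pow_le_pow_iff_right hp.out.one_lt] at h
  omega

theorem lowerCentralSeries_le_of_not_inf_le (hG : IsMaximalClass p n G) {K : Subgroup G}
    {i : ℕ} (hi : 1 ≤ i) (hin : i + 2 ≤ n) (hle : γ (i + 1) ≤ K)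
    (hK : ¬ K ⊓ γ i ≤ γ (i + 1)) : γ i ≤ K := by
  have hlt : γ (i + 1) < K ⊓ γ i :=
    lt_of_le_not_ge (le_inf hle (Subgroup.lowerCentralSeries_antitone ⊤ i.le_succ)) hK
  have hcard : Nat.card (γ i) ≤ p * Nat.card (γ (i + 1)) := by
    rw [hG.card_lowerCentralSeries hi, hG.card_lowerCentralSeries (by omega), ← pow_succ']
    exact Nat.pow_le_pow_right hp.out.pos (by omega)
  rw [← hG.isPGroup.eq_of_lt_of_le hlt inf_le_right hcard]
  exact inf_le_left

theorem centralizerModulo_inf_lowerCentralSeries_le (hG : IsMaximalClass p n G) {s : G}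
    (hs : Nat.card (centralizer {s}) = p ^ 2) {i : ℕ} (hi : 1 ≤ i) (hin : i + 3 ≤ n) :
    centralizerModulo (γ (i + 2)) s ⊓ γ i ≤ γ (i + 1) := by
  by_contra h
  have hle := hG.lowerCentralSeries_le_of_not_inf_le hi (by omega)
    (lowerCentralSeries_le_centralizerModulo (i + 1) s) h
  have hlt : γ i < centralizerModulo (γ (i + 2)) s := lt_of_le_of_ne hle fun heq =>
    hG.notMem_lowerCentralSeries_one (by omega) hs
      (Subgroup.lowerCentralSeries_antitone ⊤ hi (heq ▸ self_mem_centralizerModulo _ s))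
  have hcard := (hG.isPGroup.mul_card_le_card_of_lt hlt).trans (card_centralizerModulo_le _ s)
  rw [hs, hG.card_lowerCentralSeries hi, hG.card_lowerCentralSeries (by omega), ← pow_succ',
    ← pow_add, Nat.pow_le_pow_iff_right hp.out.one_lt] at hcard
  omega

theorem not_inf_lowerCentralSeries_le_succ_of_le (hG : IsMaximalClass p n G) {s : G}
    (hs : Nat.card (centralizer {s}) = p ^ 2) {K : Subgroup G} (hsK : s ∈ K) {i j : ℕ}
    (hi : 1 ≤ i) (hij : i ≤ j) (hjn : j + 2 ≤ n) (h : ¬ K ⊓ γ i ≤ γ (i + 1)) :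
    ¬ K ⊓ γ j ≤ γ (j + 1) := by
  induction j, hij using Nat.le_induction with
  | base => exact h
  | succ j hij ih =>
    obtain ⟨x, ⟨hxK, hxj⟩, hxj1⟩ := SetLike.not_le_iff_exists.mp (ih (by omega))
    refine SetLike.not_le_iff_exists.mpr ⟨⁅x, s⁆,
      mem_inf.mpr ⟨commutator_le_self K (commutator_mem_commutator hxK hsK),
        commutatorElement_mem_lowerCentralSeries_succ hxj s⟩, fun hx => hxj1 ?_⟩
    exact hG.centralizerModulo_inf_lowerCentralSeries_le hs (by omega) (by omega)
      ⟨mem_centralizerModulo.mpr hx, hxj⟩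

theorem not_inf_lowerCentralSeries_le_succ_of_card_eq (hG : IsMaximalClass p n G) {s : G}
    (hs : Nat.card (centralizer {s}) = p ^ 2) {K : Subgroup G} (hsK : s ∈ K) {t : ℕ}
    (hK : Nat.card K = p ^ (n - t)) (ht : 1 ≤ t) (htn : t + 2 ≤ n) :
    ¬ K ⊓ γ t ≤ γ (t + 1) := by
  intro h
  have h1 : K ⊓ γ 1 ≤ γ (t + 1) := inf_le_of_forall_inf_le_succ (by omega) fun j hj hjt =>
    by_contra fun hj' =>
      hG.not_inf_lowerCentralSeries_le_succ_of_le hs hsK hj (Nat.lt_succ_iff.mp hjt) htn hj' h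
  have hC : K ⊔ γ 1 ≤ centralizerModulo (γ 2) s := by
    refine sup_le (fun k hk => mem_centralizerModulo.mpr ?_)
      (lowerCentralSeries_le_centralizerModulo 1 s)
    exact Subgroup.lowerCentralSeries_antitone ⊤ (by omega : 2 ≤ t + 1)
      (h1 ⟨commutator_le_self K (commutator_mem_commutator hk hsK),
        commutatorElement_mem_lowerCentralSeries_succ (mem_top k) s⟩)
  have hsup := (card_le_of_le hC).trans (card_centralizerModulo_le _ s)
  have hinf := card_le_of_le h1
  have hprod := card_sup_mul_card_inf K (γ 1)
  rw [hs, hG.card_lowerCentralSeries one_le_two, ← pow_add] at hsup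
  rw [hG.card_lowerCentralSeries (by omega)] at hinf
  rw [hK, hG.card_lowerCentralSeries le_rfl, ← pow_add] at hprod
  have hpow := hprod ▸ Nat.mul_le_mul hsup hinf
  rw [← pow_add, Nat.pow_le_pow_iff_right hp.out.one_lt] at hpow
  omega

theorem lowerCentralSeries_le_of_card_eq (hG : IsMaximalClass p n G) {s : G}
    (hs : Nat.card (centralizer {s}) = p ^ 2) {K : Subgroup G} (hsK : s ∈ K) {t : ℕ}
    (hK : Nat.card K = p ^ (n - t)) (ht : 1 ≤ t) : γ t ≤ K := by
  rcases le_or_gt (n - 1) t with hnt | htn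
  · exact (Subgroup.lowerCentralSeries_antitone ⊤ hnt).trans
      (hG.lowerCentralSeries_eq_bot ▸ bot_le)
  have hmeet : ∀ j, t ≤ j → j + 2 ≤ n → ¬ K ⊓ γ j ≤ γ (j + 1) := fun j htj hjn =>
    hG.not_inf_lowerCentralSeries_le_succ_of_le hs hsK ht htj hjn
      (hG.not_inf_lowerCentralSeries_le_succ_of_card_eq hs hsK hK ht (by omega))
  refine Nat.decreasingInduction (motive := fun j _ => t ≤ j → γ j ≤ K)
    (fun j _ ih htj => hG.lowerCentralSeries_le_of_not_inf_le (by omega) (by omega)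
      (ih (by omega)) (hmeet j htj (by omega)))
    (fun _ => hG.lowerCentralSeries_eq_bot ▸ bot_le) htn.le le_rfl

end IsMaximalClass

theorem stmt10 {p n : ℕ} (hp : p.Prime) {G : Type} [Group G] [Finite G]
    (hcard : Nat.card G = p ^ n) (hn : 4 ≤ n)
    -- `G` has maximal class, i.e. nilpotency class exactly `n - 1`
    (hmc₁ : (⊤ : Subgroup G).lowerCentralSeries (n - 1) = ⊥) (hmc₂ : (⊤ : Subgroup G).lowerCentralSeries (n - 2) ≠ ⊥)
    (t : ℕ) (K : Subgroup G) (hK : Nat.card K = p ^ (n - t))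
    (s : G) (hsK : s ∈ K)
    -- `s` is a uniform element
    (hs : Nat.card (Subgroup.centralizer {s}) = p ^ 2) :
    K = Subgroup.closure {s} ⊔ (⊤ : Subgroup G).lowerCentralSeries t := by
  have := Fact.mk hp
  have hG : IsMaximalClass p n G := ⟨hcard, hmc₁, hmc₂⟩
  have hs1 := hG.notMem_lowerCentralSeries_one (by omega) hs
  rcases Nat.eq_zero_or_pos t with rfl | ht
  · rw [eq_top_of_card_eq K (by rw [hK, hcard, Nat.sub_zero]),
      Subgroup.lowerCentralSeries_zero, sup_top_eq]
  refine hG.isPGroup.eq_closure_sup_of_card_le (hG.lowerCentralSeries_le_of_card_eq hs hsK hK ht)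
    hsK (fun h => hs1 (Subgroup.lowerCentralSeries_antitone ⊤ ht h)) ?_
  rw [hK, hG.card_lowerCentralSeries ht, ← pow_succ']
  exact Nat.pow_le_pow_right hp.pos (by omega)
end

section
/- Let G be a finite p-group of maximal class of order at least p^4, and let H be a maximal subgroup of G different from G_1 = C_G(γ_2(G)/γ_4(G)). Then there is no simple virtual endomorphism φ : H → G (i.e., every homomorphism φ : H → G admits a nontrivial subgroup of H that is normal in G and φ-invariant). -/
/-!
We show that `K = γ₃(G)` is `φ`-invariant for every `φ : H →* G`. In a group of maximal class
`|G : γ₂| = p²` and `|γᵢ : γᵢ₊₁| = p` for `2 ≤ i ≤ n - 1`. As `H ≠ G₁`, `[H, γ₂] ⊄ γ₄`, so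
`[H, γ₂]γ₄ = γ₃`, and nilpotency upgrades this to `γ₃ ≤ [H, γ₂] ≤ H'`. On the other side `φ(H)`
is proper, hence lies in a maximal subgroup `M = ⟨a⟩γ₂`, and `M' ≤ [γ₂, G] = γ₃`. Together,
`φ(γ₃) ≤ φ(H') = φ(H)' ≤ M' ≤ γ₃`.
-/

open scoped commutatorElement

theorem Nat.add_sub_le_of_forall_lt_succ {d : ℕ → ℕ} {m : ℕ} (hd : ∀ i < m, d i < d (i + 1))
    {i j : ℕ} (hij : i ≤ j) (hjm : j ≤ m) : d i + (j - i) ≤ d j := by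
  induction j, hij using Nat.le_induction with
  | base => simp
  | succ j hij ih =>
    have := hd j (by omega)
    have := ih (by omega)
    omega

namespace Subgroup

variable {G : Type*} [Group G]

-- `γ k` is the paper's `γ_{k+1}(G)`: Mathlib's lower central series starts at `γ 0 = G`.
local notation "γ" k:max => Subgroup.lowerCentralSeries (⊤ : Subgroup G) k

theorem lowerCentralSeries_eq_bot_of_succ_eq [Group.IsNilpotent G] {k : ℕ}
    (h : γ (k + 1) = γ k) : γ k = ⊥ := by
  have hstable : ∀ j, γ (k + j) = γ k := by
    intro j
    induction j with
    | zero => rfl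
    | succ j ih => rw [← add_assoc, lowerCentralSeries_succ, ih, ← lowerCentralSeries_succ, h]
  obtain ⟨m, hm⟩ := nilpotent_iff_lowerCentralSeries.1 ‹Group.IsNilpotent G›
  rw [← hstable m, ← le_bot_iff, ← hm]
  exact lowerCentralSeries_antitone _ (Nat.le_add_left m k)

theorem lowerCentralSeries_le_of_le_sup [Group.IsNilpotent G] {N : Subgroup G} [N.Normal]
    {k : ℕ} (h : γ k ≤ N ⊔ γ (k + 1)) : γ k ≤ N := by
  set f := QuotientGroup.mk' N
  have hmap : ∀ i, (γ i).map f = (⊤ : Subgroup (G ⧸ N)).lowerCentralSeries i := fun i => by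
    rw [map_lowerCentralSeries, map_top_of_surjective f QuotientGroup.mk_surjective]
  have hle := map_mono (f := f) h
  rw [Subgroup.map_sup, QuotientGroup.map_mk'_self, bot_sup_eq, hmap, hmap] at hle
  have hbot := lowerCentralSeries_eq_bot_of_succ_eq
    (le_antisymm (lowerCentralSeries_antitone _ k.le_succ) hle)
  rwa [← hmap, map_eq_bot_iff, QuotientGroup.ker_mk'] at hbot

theorem eq_of_le_of_relIndex_prime {A B C : Subgroup G} (hAB : A ≤ B) (hBC : B ≤ C)
    (hBA : ¬ B ≤ A) (hp : (A.relIndex C).Prime) : B = C := by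
  rw [← relIndex_mul_relIndex A B C hAB hBC, Nat.prime_mul_iff] at hp
  rcases hp with ⟨_, hBC1⟩ | ⟨_, hAB1⟩
  · exact le_antisymm hBC (relIndex_eq_one.1 hBC1)
  · exact absurd (relIndex_eq_one.1 hAB1) hBA

theorem commutator_mem_of_mem_zpowers_sup {N : Subgroup G} [N.Normal] {a b : G}
    (hb : b ∈ zpowers a ⊔ N) : ⁅a, b⁆ ∈ ⁅N, (⊤ : Subgroup G)⁆ := by
  rw [← SetLike.mem_coe, mul_normal] at hb
  obtain ⟨x, hx, u, hu, rfl⟩ := hb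
  obtain ⟨j, rfl⟩ := mem_zpowers_iff.1 hx
  have hconj : ⁅a, a ^ j * u⁆ = a ^ j * ⁅a, u⁆ * (a ^ j)⁻¹ := by
    simp only [commutatorElement_def]; group
  rw [hconj, commutator_comm]
  exact (commutator_normal ⊤ N).conj_mem _ (commutator_mem_commutator (mem_top a) hu) _

/-- `M = ⟨a⟩N` for any `a ∈ M \ N`, so `M` is abelian modulo `[N, G]`. -/
theorem commutator_le_of_relIndex_prime {N M : Subgroup G} [N.Normal] (hNM : N ≤ M)
    (hp : (N.relIndex M).Prime) : ⁅M, M⁆ ≤ ⁅N, (⊤ : Subgroup G)⁆ := by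
  refine commutator_le.2 fun a ha b hb => ?_
  by_cases haN : a ∈ N
  · exact commutator_mem_commutator haN (mem_top b)
  · have hM : zpowers a ⊔ N = M := eq_of_le_of_relIndex_prime le_sup_right
      (sup_le (zpowers_le.2 ha) hNM) (fun h => haN (h (mem_sup_left (mem_zpowers a)))) hp
    exact commutator_mem_of_mem_zpowers_sup (hM ▸ hb)

theorem commutator_le_of_index_eq_minFac_card {M : Subgroup G}
    (hM : M.index = (Nat.card G).minFac) : _root_.commutator G ≤ M := by
  by_cases hG : Nat.card G = 1
  · rw [hG, Nat.minFac_one, index_eq_one] at hM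
    exact hM ▸ le_top
  · have := normal_of_index_eq_minFac_card hM
    have : Fact (Nat.card (G ⧸ M)).Prime := ⟨by rw [← index_eq_card, hM]; exact Nat.minFac_prime hG⟩
    have : IsCyclic (G ⧸ M) := isCyclic_of_prime_card rfl
    exact Normal.quotient_commutative_iff_commutator_le.1 inferInstance

theorem map_subgroupOf_commutator {G' : Type*} [Group G'] (H : Subgroup G) (φ : H →* G') :
    (⁅H, H⁆.subgroupOf H).map φ = ⁅φ.range, φ.range⁆ := by
  have hH : ⁅H, H⁆ = map H.subtype ⁅(⊤ : Subgroup H), ⊤⁆ := by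
    rw [map_commutator, ← MonoidHom.range_eq_map, range_subtype]
  rw [hH, subgroupOf, comap_map_eq_self_of_injective H.subtype_injective, map_commutator,
    ← MonoidHom.range_eq_map]

theorem commutator_lowerCentralSeries_eq_of_not_le [Group.IsNilpotent G] {k : ℕ}
    (hk : ((γ (k + 2)).relIndex (γ (k + 1))).Prime) {X : Subgroup G} [X.Normal]
    (hX : ¬ ⁅X, γ k⁆ ≤ γ (k + 2)) : ⁅X, γ k⁆ = γ (k + 1) := by
  have hXk : ⁅X, γ k⁆ ≤ γ (k + 1) := by
    rw [lowerCentralSeries_succ, commutator_comm]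
    exact commutator_mono le_rfl le_top
  have hsup : ⁅X, γ k⁆ ⊔ γ (k + 2) = γ (k + 1) :=
    eq_of_le_of_relIndex_prime le_sup_right
      (sup_le hXk (lowerCentralSeries_antitone _ (k + 1).le_succ))
      (fun h => hX (le_sup_left.trans h)) hk
  exact le_antisymm hXk (lowerCentralSeries_le_of_le_sup hsup.ge)

theorem range_ne_top_of_ne_top [Finite G] {H : Subgroup G} (hH : H ≠ ⊤) (φ : H →* G) :
    φ.range ≠ ⊤ := by
  intro hφ
  refine hH ((card_eq_iff_eq_top H).1 (le_antisymm (card_le_card_group H) ?_))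
  calc Nat.card G = Nat.card φ.range := by rw [hφ, card_top]
    _ ≤ Nat.card H := Nat.le_of_dvd Nat.card_pos (card_range_dvd φ)

theorem exists_le_index_eq_prime [Finite G] {p n : ℕ} (hp : p.Prime) (hcard : Nat.card G = p ^ n)
    {K : Subgroup G} (hK : K ≠ ⊤) : ∃ M : Subgroup G, K ≤ M ∧ M.index = p := by
  have : Fact p.Prime := ⟨hp⟩
  obtain ⟨e, hen, hKe⟩ := (Nat.dvd_prime_pow hp).1 (hcard ▸ K.card_subgroup_dvd_card)
  have hne : e ≠ n := fun h => hK ((card_eq_iff_eq_top _).1 (by rw [hKe, hcard, h]))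
  obtain ⟨M, hM, hKM⟩ := Sylow.exists_subgroup_card_pow_prime_le p
    (hcard ▸ pow_dvd_pow p (n.sub_le 1)) K hKe (by omega : e ≤ n - 1)
  refine ⟨M, hKM, Nat.eq_of_mul_eq_mul_left (pow_pos hp.pos (n - 1)) ?_⟩
  rw [← hM, card_mul_index, hcard, hM, ← pow_succ, Nat.sub_add_cancel (by omega)]

theorem lowerCentralSeries_one_le_of_index_eq_prime {p n : ℕ} (hp : p.Prime)
    (hcard : Nat.card G = p ^ n) {M : Subgroup G} (hM : M.index = p) : γ 1 ≤ M := by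
  have hn : n ≠ 0 := by
    rintro rfl
    have h := M.index_dvd_card
    rw [hM, hcard, pow_zero, Nat.dvd_one] at h
    exact hp.one_lt.ne' h
  rw [top_lowerCentralSeries_one]
  exact commutator_le_of_index_eq_minFac_card (by rw [hcard, hp.pow_minFac hn, hM])

section MaximalClass

variable {p n : ℕ}

theorem index_lowerCentralSeries_of_maximalClass (hp : p.Prime) (hcard : Nat.card G = p ^ n)
    (hn : 3 ≤ n) (hmc₁ : γ (n - 1) = ⊥) (hmc₂ : γ (n - 2) ≠ ⊥) {i : ℕ} (hi : 1 ≤ i)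
    (hin : i ≤ n - 1) : (γ i).index = p ^ (i + 1) := by
  have : Group.IsNilpotent G := nilpotent_iff_lowerCentralSeries.2 ⟨n - 1, hmc₁⟩
  have hstrict : ∀ i ≤ n - 2, ¬ γ i ≤ γ (i + 1) := fun i hi hle => hmc₂ <| le_bot_iff.1 <|
    lowerCentralSeries_eq_bot_of_succ_eq
      (le_antisymm (lowerCentralSeries_antitone _ i.le_succ) hle) ▸ lowerCentralSeries_antitone _ hi
  choose d hd using fun i =>
    ((Nat.dvd_prime_pow hp).1 (hcard ▸ (γ i).index_dvd_card)).imp fun _ => And.right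
  have hmono : ∀ i < n - 1, d i < d (i + 1) := by
    intro i hi
    have h := relIndex_mul_index (lowerCentralSeries_antitone (⊤ : Subgroup G) i.le_succ)
    rw [hd, hd] at h
    have hle : d i ≤ d (i + 1) := (Nat.pow_dvd_pow_iff_le_right hp.one_lt).1 (Dvd.intro_left _ h)
    refine hle.lt_of_ne fun heq => hstrict i (by omega) (relIndex_eq_one.1 ?_)
    rw [heq] at h
    exact Nat.eq_of_mul_eq_mul_right (pow_pos hp.pos _) (h.trans (one_mul _).symm)
  have hd1 : d 1 ≠ 1 := fun h1 => by
    have hrel : ((γ 1).relIndex ⊤).Prime := by rw [relIndex_top_right, hd, h1, pow_one]; exact hp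
    exact hstrict 1 (by omega) (commutator_le_of_relIndex_prime le_top hrel)
  have hd0 : d 1 ≠ 0 := fun h0 =>
    hstrict 0 (by omega) (index_eq_one.1 (by rw [hd, h0, pow_zero])).ge
  have hdn : d (n - 1) = n := Nat.pow_right_injective hp.two_le
    (show p ^ d (n - 1) = p ^ n by rw [← hd, hmc₁, index_bot, hcard])
  -- `n - 2` strict steps from `d 1 ≥ 2` up to `d (n - 1) = n`: each step is exactly one.
  have := Nat.add_sub_le_of_forall_lt_succ hmono hi hin
  have := Nat.add_sub_le_of_forall_lt_succ hmono hin le_rfl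
  rw [hd]
  congr 1
  omega

theorem relIndex_lowerCentralSeries_succ_of_maximalClass (hp : p.Prime)
    (hcard : Nat.card G = p ^ n) (hn : 3 ≤ n) (hmc₁ : γ (n - 1) = ⊥) (hmc₂ : γ (n - 2) ≠ ⊥)
    {i : ℕ} (hi : 1 ≤ i) (hin : i ≤ n - 2) : (γ (i + 1)).relIndex (γ i) = p := by
  have h := relIndex_mul_index (lowerCentralSeries_antitone (⊤ : Subgroup G) i.le_succ)
  rw [index_lowerCentralSeries_of_maximalClass hp hcard hn hmc₁ hmc₂ hi (by omega),
    index_lowerCentralSeries_of_maximalClass hp hcard hn hmc₁ hmc₂ (by omega) (by omega),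
    pow_succ _ (i + 1)] at h
  exact Nat.eq_of_mul_eq_mul_right (pow_pos hp.pos _) (h.trans (mul_comm _ _))

theorem commutator_le_of_index_eq_of_maximalClass (hp : p.Prime)
    (hcard : Nat.card G = p ^ n) (hn : 3 ≤ n) (hmc₁ : γ (n - 1) = ⊥) (hmc₂ : γ (n - 2) ≠ ⊥)
    {M : Subgroup G} (hM : M.index = p) : ⁅M, M⁆ ≤ γ 2 := by
  have hγM := lowerCentralSeries_one_le_of_index_eq_prime hp hcard hM
  have h := relIndex_mul_index hγM
  rw [hM, index_lowerCentralSeries_of_maximalClass hp hcard hn hmc₁ hmc₂ le_rfl (by omega)] at h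
  have hrel : (γ 1).relIndex M = p :=
    Nat.eq_of_mul_eq_mul_right hp.pos (h.trans (pow_two p))
  exact commutator_le_of_relIndex_prime hγM (hrel ▸ hp)

theorem commutator_lowerCentralSeries_one_eq_of_maximalClass (hp : p.Prime)
    (hcard : Nat.card G = p ^ n) (hn : 4 ≤ n) (hmc₁ : γ (n - 1) = ⊥) (hmc₂ : γ (n - 2) ≠ ⊥)
    {G1 : Subgroup G} (hG1 : ∀ g : G, g ∈ G1 ↔ ∀ x ∈ γ 1, ⁅g, x⁆ ∈ γ 3)
    {H : Subgroup G} (hH : H.index = p) (hHG1 : H ≠ G1) : ⁅H, γ 1⁆ = γ 2 := by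
  have : Group.IsNilpotent G := nilpotent_iff_lowerCentralSeries.2 ⟨n - 1, hmc₁⟩
  have : H.Normal :=
    normal_of_index_eq_minFac_card (by rw [hcard, hp.pow_minFac (by omega), hH])
  have hrel : (γ 3).relIndex (γ 2) = p :=
    relIndex_lowerCentralSeries_succ_of_maximalClass hp hcard (by omega) hmc₁ hmc₂ (i := 2)
      (by omega) (by omega)
  have hle_G1 : ∀ X : Subgroup G, X ≤ G1 ↔ ⁅X, γ 1⁆ ≤ γ 3 := by
    intro X
    rw [commutator_le, SetLike.le_def]
    simp only [hG1]
  have htop : ¬ ⊤ ≤ G1 := by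
    rw [hle_G1, commutator_comm, ← lowerCentralSeries_succ, ← relIndex_eq_one, hrel]
    exact hp.one_lt.ne'
  have hH_G1 : ¬ H ≤ G1 := fun hle => htop (eq_of_le_of_relIndex_prime hle le_top
    (fun h => hHG1 (le_antisymm hle h)) (by rwa [relIndex_top_right, hH])).ge
  exact commutator_lowerCentralSeries_eq_of_not_le (hrel ▸ hp) (mt (hle_G1 H).2 hH_G1)

end MaximalClass

end Subgroup

theorem stmt12 {p n : ℕ} (hp : p.Prime) {G : Type} [Group G] [Finite G]
    (hcard : Nat.card G = p ^ n) (hn : 4 ≤ n)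
    -- `G` has maximal class, i.e. nilpotency class exactly `n - 1`
    (hmc₁ : Subgroup.lowerCentralSeries (⊤ : Subgroup G) (n - 1) = ⊥) (hmc₂ : Subgroup.lowerCentralSeries (⊤ : Subgroup G) (n - 2) ≠ ⊥)
    -- `G1 = C_G(γ₂(G)/γ₄(G))`
    (G1 : Subgroup G)
    (hG1 : ∀ g : G, g ∈ G1 ↔
      ∀ x ∈ Subgroup.lowerCentralSeries (⊤ : Subgroup G) 1, ⁅g, x⁆ ∈ Subgroup.lowerCentralSeries (⊤ : Subgroup G) 3)
    (H : Subgroup G) (hHmax : H.index = p) (hH : H ≠ G1) :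
    -- there is no simple virtual endomorphism from `H` to `G`
    ∀ φ : H →* G, ∃ K : Subgroup G,
      K ≠ ⊥ ∧ K ≤ H ∧ K.Normal ∧ Subgroup.map φ (K.subgroupOf H) ≤ K := by
  intro φ
  have hγH := Subgroup.lowerCentralSeries_one_le_of_index_eq_prime hp hcard hHmax
  have hγ3H : (⊤ : Subgroup G).lowerCentralSeries 2 ≤ ⁅H, H⁆ :=
    (Subgroup.commutator_lowerCentralSeries_one_eq_of_maximalClass hp hcard hn hmc₁ hmc₂ hG1
      hHmax hH).ge.trans (Subgroup.commutator_mono le_rfl hγH)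
  have hHtop : H ≠ ⊤ := fun h => hp.one_lt.ne' (by rw [← hHmax, h, Subgroup.index_top])
  obtain ⟨M, hφM, hM⟩ :=
    Subgroup.exists_le_index_eq_prime hp hcard (Subgroup.range_ne_top_of_ne_top hHtop φ)
  have hγ3 : (⊤ : Subgroup G).lowerCentralSeries 2 ≠ ⊥ := fun h =>
    hmc₂ (le_bot_iff.1 (h ▸ Subgroup.lowerCentralSeries_antitone _ (by omega)))
  refine ⟨(⊤ : Subgroup G).lowerCentralSeries 2, hγ3,
    (Subgroup.lowerCentralSeries_antitone _ one_le_two).trans hγH, inferInstance, ?_⟩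
  calc Subgroup.map φ (((⊤ : Subgroup G).lowerCentralSeries 2).subgroupOf H)
      ≤ Subgroup.map φ (⁅H, H⁆.subgroupOf H) := Subgroup.map_mono (Subgroup.subgroupOf_mono _ hγ3H)
    _ = ⁅φ.range, φ.range⁆ := Subgroup.map_subgroupOf_commutator H φ
    _ ≤ ⁅M, M⁆ := Subgroup.commutator_mono hφM hφM
    _ ≤ (⊤ : Subgroup G).lowerCentralSeries 2 :=
      Subgroup.commutator_le_of_index_eq_of_maximalClass hp hcard (by omega) hmc₁ hmc₂ hM
end

section
/- The wreath product C_p ≀ C_p (of order p^{p+1}) admits a simple virtual endomorphism from a maximal subgroup; equivalently, it is a self-similar p-group of maximal class of order p^{p+1}. -/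
/-- The base group `(C_p)^p` of the wreath product `C_p ≀ C_p`. -/
abbrev WreathBase (p : ℕ) := ZMod p → Multiplicative (ZMod p)

/-- Cyclic shift of coordinates by `k`. -/
def shiftAut (p : ℕ) (k : ZMod p) : WreathBase p ≃* WreathBase p where
  toFun f := fun i => f (i + k)
  invFun f := fun i => f (i - k)
  left_inv f := funext fun i => by simp
  right_inv f := funext fun i => by simp
  map_mul' f g := rfl

/-- The action of the top group `C_p` on the base, by cyclic shifts. -/
def shiftHom (p : ℕ) : Multiplicative (ZMod p) →* MulAut (WreathBase p) where
  toFun k := shiftAut p k.toAdd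
  map_one' := by
    apply MulEquiv.ext; intro f; funext i; simp [shiftAut]
  map_mul' a b := by
    apply MulEquiv.ext; intro f; funext i
    show f (i + (Multiplicative.toAdd a + Multiplicative.toAdd b)) = _
    simp [shiftAut]; congr 1; abel

/-- The regular wreath product `C_p ≀ C_p`. -/
abbrev WreathProductCpCp (p : ℕ) :=
  WreathBase p ⋊[shiftHom p] Multiplicative (ZMod p)

/-!
The base `B = 𝔽_p^p` is a module over `𝔽_p[S]`, `S` the cyclic shift, and commutation with the
top element `n` acts on `B` as `S^n - 1 = (S - 1)(1 + S + ⋯ + S^(n-1))`. Hence the lower central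
series satisfies `γ_(k+1) ≤ (S - 1)^(k+1) B`, and `(S - 1)^p = S^p - 1 = 0` in characteristic `p`
bounds the class by `p`. Conversely `(X - 1)^(p-1) = 1 + X + ⋯ + X^(p-1)` over `𝔽_p`, so
taking `p - 1` iterated commutators of a basis vector with the top generator gives the nonzero
vector `(1, …, 1)`. Finally, a subgroup of `B` that is normal in the wreath product and invariant
under the projection `B → C_p` onto coordinate `0` consists of vectors all of whose shifts vanish
at `0`, so it is trivial.
-/

open SemidirectProduct Finset Polynomial
open scoped commutatorElement

theorem sub_one_pow_pred_eq_geom_sum {R : Type*} [CommRing R] [IsDomain R] {p : ℕ} [Fact p.Prime]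
    [CharP R p] {x : R} (hx : x ≠ 1) : (x - 1) ^ (p - 1) = ∑ i ∈ range p, x ^ i := by
  refine mul_left_cancel₀ (sub_ne_zero.mpr hx) ?_
  rw [← pow_succ', Nat.sub_add_cancel (Fact.out : p.Prime).one_le, mul_geom_sum, sub_pow_char,
    one_pow]

theorem pow_sub_one_mul_sub_one_pow {R : Type*} [Ring R] (x : R) (n k : ℕ) :
    (x ^ n - 1) * (x - 1) ^ k = (x - 1) ^ (k + 1) * ∑ i ∈ range n, x ^ i := by
  have hcomm : Commute ((x - 1) ^ k) (x ^ n - 1) :=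
    (((Commute.refl x).sub_left (Commute.one_left x)).pow_left k).pow_right n |>.sub_right
      (Commute.one_right _)
  rw [pow_succ, mul_assoc, mul_geom_sum, hcomm.eq]

namespace SemidirectProduct

section Hom

variable {N G : Type*} [Group N] [Group G] {φ : G →* MulAut N}

def kerRightHomLeft : (rightHom : N ⋊[φ] G →* G).ker →* N where
  toFun x := x.1.left
  map_one' := rfl
  map_mul' x y := by
    rw [Subgroup.coe_mul, mul_left, show x.1.right = 1 from x.2, map_one, MulAut.one_apply]

theorem index_ker_rightHom : (rightHom : N ⋊[φ] G →* G).ker.index = Nat.card G := by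
  rw [Subgroup.index_ker, MonoidHom.range_eq_top.mpr rightHom_surjective, Subgroup.card_top]

theorem isSimpleVirtualEndo_inr_comp (π : N →* G) (hπ : ∀ n, (∀ g, π (φ g n) = 1) → n = 1) :
    IsSimpleVirtualEndo rightHom.ker ((inr.comp π).comp (kerRightHomLeft (φ := φ))) := by
  intro K hKH hK hKφ
  refine (Subgroup.eq_bot_iff_forall K).2 fun x hx => ?_
  have hxH := hKH hx
  rw [← range_inl_eq_ker_rightHom] at hxH
  obtain ⟨n, rfl⟩ := hxH
  suffices n = 1 by rw [this, map_one]
  refine hπ n fun g => ?_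
  have hconj : inl (φ g n) ∈ K := by simpa [inl_aut] using hK.conj_mem _ hx (inr g)
  have hmem : (⟨inl (φ g n), hKH hconj⟩ : rightHom.ker) ∈ K.subgroupOf rightHom.ker := hconj
  simpa [kerRightHomLeft] using hKH (hKφ (Subgroup.mem_map_of_mem _ hmem))

end Hom

section Commutative

variable {N G : Type*} [CommGroup N] [CommGroup G] {φ : G →* MulAut N}

theorem commutatorElement_eq_inl (a b : N ⋊[φ] G) :
    ⁅a, b⁆ = inl ((φ a.right b.left * b.left⁻¹) * (φ b.right a.left * a.left⁻¹)⁻¹) := by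
  have hφ : ∀ n, φ a.right (φ b.right n) = φ b.right (φ a.right n) := fun n => by
    rw [← MulAut.mul_apply, ← map_mul, mul_comm, map_mul, MulAut.mul_apply]
  ext
  · simp [commutatorElement_def, hφ]
    ac_rfl
  · simp [commutatorElement_def, mul_comm]

theorem commutatorElement_inr_inl (g : G) (n : N) :
    ⁅(inr g : N ⋊[φ] G), (inl n : N ⋊[φ] G)⁆ = inl (φ g n * n⁻¹) := by
  simp [commutatorElement_eq_inl]

theorem lowerCentralSeries_succ_le_map_inl (R : ℕ → Subgroup N) (hR0 : R 0 = ⊤)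
    (hR : ∀ k, ∀ n ∈ R k, ∀ g, φ g n * n⁻¹ ∈ R (k + 1)) (k : ℕ) :
    (⊤ : Subgroup (N ⋊[φ] G)).lowerCentralSeries (k + 1) ≤ (R (k + 1)).map inl := by
  induction k with
  | zero =>
    rw [Subgroup.lowerCentralSeries_succ, Subgroup.commutator_le]
    intro a _ b _
    have hR1 : ∀ n g, φ g n * n⁻¹ ∈ R 1 := fun n => hR 0 n (hR0 ▸ Subgroup.mem_top n)
    rw [commutatorElement_eq_inl]
    exact Subgroup.mem_map_of_mem _ (mul_mem (hR1 _ _) (inv_mem (hR1 _ _)))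
  | succ k ih =>
    rw [Subgroup.lowerCentralSeries_succ, Subgroup.commutator_le]
    intro a ha b _
    obtain ⟨n, hn, rfl⟩ := ih ha
    rw [commutatorElement_eq_inl]
    simpa using Subgroup.mem_map_of_mem inl (inv_mem (hR _ n hn b.right))

theorem inl_mem_lowerCentralSeries_succ {k : ℕ} {n : N}
    (hn : inl n ∈ (⊤ : Subgroup (N ⋊[φ] G)).lowerCentralSeries k) (g : G) :
    inl (φ g n * n⁻¹) ∈ (⊤ : Subgroup (N ⋊[φ] G)).lowerCentralSeries (k + 1) := by
  rw [← commutatorElement_inr_inl, Subgroup.lowerCentralSeries_succ, Subgroup.commutator_comm]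
  exact Subgroup.commutator_mem_commutator (Subgroup.mem_top _) hn

end Commutative

end SemidirectProduct

namespace WreathProductCpCp

variable (p : ℕ)

theorem card_eq [NeZero p] : Nat.card (WreathProductCpCp p) = p ^ (p + 1) := by
  have hQ : Nat.card (Multiplicative (ZMod p)) = p := by
    rw [Nat.card_congr Multiplicative.toAdd, Nat.card_zmod]
  rw [SemidirectProduct.card, Nat.card_fun, hQ, Nat.card_zmod, pow_succ]

def cyclicShift : Module.End (ZMod p) (ZMod p → ZMod p) :=
  LinearMap.funLeft (ZMod p) (ZMod p) (· + 1)

theorem cyclicShift_pow_apply (n : ℕ) (f : ZMod p → ZMod p) (i : ZMod p) :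
    (cyclicShift p ^ n) f i = f (i + n) := by
  induction n generalizing f with
  | zero => simp
  | succ n ih => rw [pow_succ, Module.End.mul_apply, ih]; simp [cyclicShift, add_assoc]

theorem cyclicShift_pow_self : cyclicShift p ^ p = 1 := by
  ext f i
  simp [cyclicShift_pow_apply]

theorem cyclicShift_sub_one_pow_pred [Fact p.Prime] :
    (cyclicShift p - 1) ^ (p - 1) = ∑ i ∈ range p, cyclicShift p ^ i := by
  have hX : (X : (ZMod p)[X]) ≠ 1 := by simpa using sub_ne_zero.mp (X_sub_C_ne_zero (1 : ZMod p))
  simpa using congrArg (aeval (cyclicShift p)) (sub_one_pow_pred_eq_geom_sum hX)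

theorem cyclicShift_sub_one_pow_self [Fact p.Prime] : (cyclicShift p - 1) ^ p = 0 := by
  have hp : p - 1 + 1 = p := Nat.sub_add_cancel (Fact.out : p.Prime).one_le
  calc (cyclicShift p - 1) ^ p = (cyclicShift p - 1) * (cyclicShift p - 1) ^ (p - 1) := by
        rw [← pow_succ', hp]
    _ = 0 := by rw [cyclicShift_sub_one_pow_pred, mul_geom_sum, cyclicShift_pow_self, sub_self]

def baseFiltration (k : ℕ) : Subgroup (WreathBase p) :=
  (LinearMap.range ((cyclicShift p - 1) ^ k)).toAddSubgroup.toSubgroup.map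
    (MulEquiv.funMultiplicative (ZMod p) (ZMod p)).toMonoidHom

theorem mem_baseFiltration {k : ℕ} {v : WreathBase p} :
    v ∈ baseFiltration p k ↔ (fun i => (v i).toAdd) ∈ LinearMap.range ((cyclicShift p - 1) ^ k) :=
  Subgroup.mem_map_equiv

theorem baseFiltration_zero : baseFiltration p 0 = ⊤ :=
  eq_top_iff.2 fun _ _ => (mem_baseFiltration p).2 ⟨_, rfl⟩

theorem baseFiltration_self [Fact p.Prime] : baseFiltration p p = ⊥ := by
  simp [baseFiltration, cyclicShift_sub_one_pow_self]

theorem shiftHom_mul_inv_mem_baseFiltration [NeZero p] {k : ℕ} {v : WreathBase p}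
    (hv : v ∈ baseFiltration p k) (q : Multiplicative (ZMod p)) :
    shiftHom p q v * v⁻¹ ∈ baseFiltration p (k + 1) := by
  rw [mem_baseFiltration] at hv ⊢
  obtain ⟨f, hf⟩ := hv
  obtain ⟨n, rfl⟩ : ∃ n : ℕ, q = .ofAdd (n : ZMod p) := ⟨q.toAdd.val, by simp⟩
  refine ⟨(∑ i ∈ range n, cyclicShift p ^ i) f, ?_⟩
  rw [← Module.End.mul_apply, ← pow_sub_one_mul_sub_one_pow, Module.End.mul_apply, hf]
  ext i
  simp [cyclicShift_pow_apply, shiftHom, shiftAut, sub_eq_add_neg]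

theorem lowerCentralSeries_eq_bot [Fact p.Prime] :
    (⊤ : Subgroup (WreathProductCpCp p)).lowerCentralSeries p = ⊥ := by
  have h := lowerCentralSeries_succ_le_map_inl (baseFiltration p) (baseFiltration_zero p)
    (fun _ _ hv q => shiftHom_mul_inv_mem_baseFiltration p hv q) (p - 1)
  rwa [Nat.sub_add_cancel (Fact.out : p.Prime).one_le, baseFiltration_self, Subgroup.map_bot,
    le_bot_iff] at h

theorem inl_mem_lowerCentralSeries (k : ℕ) (f : ZMod p → ZMod p) :
    (inl (MulEquiv.funMultiplicative _ _ (.ofAdd (((cyclicShift p - 1) ^ k) f))) :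
      WreathProductCpCp p) ∈ (⊤ : Subgroup (WreathProductCpCp p)).lowerCentralSeries k := by
  induction k with
  | zero => exact Subgroup.mem_top _
  | succ k ih =>
    convert inl_mem_lowerCentralSeries_succ ih (.ofAdd 1) using 2
    ext i
    simp [pow_succ', cyclicShift, sub_eq_add_neg, shiftHom, shiftAut]

theorem cyclicShift_sub_one_pow_pred_single [Fact p.Prime] :
    ((cyclicShift p - 1) ^ (p - 1)) (Pi.single 0 1) 0 = 1 := by
  rw [cyclicShift_sub_one_pow_pred, LinearMap.sum_apply, Finset.sum_apply]
  simp only [cyclicShift_pow_apply, zero_add]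
  rw [Finset.sum_eq_single_of_mem 0 (mem_range.2 (Fact.out : p.Prime).pos) fun i hi hi0 => ?_]
  · simp
  · refine Pi.single_eq_of_ne (fun hi_eq => hi0 ?_) _
    exact Nat.eq_zero_of_dvd_of_lt ((ZMod.natCast_eq_zero_iff i p).1 hi_eq) (mem_range.1 hi)

theorem lowerCentralSeries_pred_ne_bot [Fact p.Prime] :
    (⊤ : Subgroup (WreathProductCpCp p)).lowerCentralSeries (p - 1) ≠ ⊥ := by
  intro h
  have hmem := inl_mem_lowerCentralSeries p (p - 1) (Pi.single 0 1)
  rw [h, Subgroup.mem_bot, map_eq_one_iff _ inl_injective, MulEquivClass.map_eq_one_iff,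
    ofAdd_eq_one] at hmem
  simpa [cyclicShift_sub_one_pow_pred_single] using congrFun hmem 0

theorem index_ker_rightHom :
    (rightHom : WreathProductCpCp p →* Multiplicative (ZMod p)).ker.index = p := by
  rw [SemidirectProduct.index_ker_rightHom, Nat.card_congr Multiplicative.toAdd, Nat.card_zmod]

theorem eq_one_of_forall_shiftHom_apply_zero {v : WreathBase p}
    (hv : ∀ q, shiftHom p q v 0 = 1) : v = 1 := by
  funext i
  simpa [shiftHom, shiftAut] using hv (.ofAdd i)

end WreathProductCpCp

theorem stmt14 (p : ℕ) (hp : p.Prime) :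
    Nat.card (WreathProductCpCp p) = p ^ (p + 1) ∧
    -- maximal class: nilpotency class is `p = (p+1) - 1`
    (⊤ : Subgroup (WreathProductCpCp p)).lowerCentralSeries p = ⊥ ∧
    (⊤ : Subgroup (WreathProductCpCp p)).lowerCentralSeries (p - 1) ≠ ⊥ ∧
    -- self-similarity: a simple virtual endomorphism from a maximal subgroup
    ∃ (H : Subgroup (WreathProductCpCp p)) (φ : H →* WreathProductCpCp p),
      H.index = p ∧ IsSimpleVirtualEndo H φ := by
  have := Fact.mk hp
  exact ⟨WreathProductCpCp.card_eq p, WreathProductCpCp.lowerCentralSeries_eq_bot p,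
    WreathProductCpCp.lowerCentralSeries_pred_ne_bot p, _, _,
    WreathProductCpCp.index_ker_rightHom p,
    isSimpleVirtualEndo_inr_comp (Pi.evalMonoidHom _ 0)
      fun _ => WreathProductCpCp.eq_one_of_forall_shiftHom_apply_zero p⟩
end

section
/- Let G be a finite p-group and φ : H → G a simple virtual endomorphism from a maximal subgroup H. If U ≤ H is a nontrivial uniform (powerful and torsion-free-ranked, i.e., powerful with |U^{p^i} : U^{p^{i+1}}| constant) normal subgroup of G, then exp(U) ≤ exp(G/U) for p odd, and exp(U) ≤ 4·exp(G/U) for p = 2. -/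
/-- The subgroup generated by all `k`-th powers of elements of `G`. -/
def subgroupPow (G : Type*) [Group G] (k : ℕ) : Subgroup G :=
  Subgroup.closure {x : G | ∃ y : G, x = y ^ k}

/-!
Write `exp U = p ^ m`, `exp (G ⧸ U) = p ^ c`, and let `Z k` be the agemo series of `U`
(`Z 0 = U`, `Z (k + 1)` generated by the `p`-th powers of `Z k`). Since `U` is powerful,
`[Z k, U] ≤ Z (k + 1)` (even `≤ Z (k + 2)` when `p = 2`), by a Frattini-type absorption argument in
the `p`-group `U`. Hence `p`-th powers are multiplicative modulo `Z (k + 2)`, every element of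
`Z k` is a `p ^ k`-th power, and `x ↦ x ^ p` maps `Z k / Z (k + 1)` onto `Z (k + 1) / Z (k + 2)`.
Uniformity makes these maps bijective, so an element of `U` killed by `p ^ (m - c)` lies in `Z c`,
i.e. it is a `p ^ c`-th power.

If `c < m` and `u ∈ U`, then `g = φ u` satisfies `g ^ p ^ m = 1` and `g ^ p ^ c ∈ U`, so
`g ^ p ^ c = w ^ p ^ c` for some `w ∈ U`. Thus the subgroup generated by the `p ^ c`-th powers of
`U` is normal, lies in `H` and is `φ`-invariant; by simplicity it is trivial, that is
`exp U ∣ p ^ c`. So `exp U ≤ exp (G ⧸ U)` for every `p`.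
-/

open scoped commutatorElement

section Commutators

variable {Γ : Type*} [Group Γ]

lemma mul_pow_of_commute_commutatorElement {a b : Γ} (h : ∀ z, Commute ⁅b, a⁆ z) (n : ℕ) :
    (a * b) ^ n = a ^ n * b ^ n * ⁅b, a⁆ ^ n.choose 2 := by
  set e := ⁅b, a⁆
  have hba : b * a = a * b * e := by
    rw [← (h _).eq]; simp only [e, commutatorElement_def]; group
  have hpow_swap : ∀ n : ℕ, b ^ n * a = a * b ^ n * e ^ n := by
    intro n
    induction n with
    | zero => simp
    | succ n ih =>
      calc b ^ (n + 1) * a = b * a * (b ^ n * e ^ n) := by rw [pow_succ', mul_assoc, ih]; group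
        _ = a * b * (e * b ^ n) * e ^ n := by rw [hba]; group
        _ = a * b ^ (n + 1) * e ^ (n + 1) := by rw [((h _).pow_right n).eq]; group
  induction n with
  | zero => simp
  | succ n ih =>
    calc (a * b) ^ (n + 1) = a ^ n * (b ^ n * a) * b * e ^ n.choose 2 := by
          rw [pow_succ, ih, mul_assoc, ((h _).pow_left _).eq]; group
      _ = a ^ (n + 1) * b ^ n * (e ^ n * b) * e ^ n.choose 2 := by rw [hpow_swap]; group
      _ = a ^ (n + 1) * b ^ (n + 1) * e ^ (n + 1).choose 2 := by
          rw [((h b).pow_left n).eq, Nat.choose_succ_succ' n 1, Nat.choose_one_right, pow_add]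
          group

lemma commutatorElement_pow_left {y g : Γ} (h : ∀ z, Commute ⁅y, ⁅y, g⁆⁆ z) (n : ℕ) :
    ⁅y ^ n, g⁆ = ⁅y, g⁆ ^ n * ⁅y, ⁅y, g⁆⁆ ^ n.choose 2 := by
  set c := ⁅y, g⁆
  set d := ⁅y, c⁆
  have hconj_c : ∀ m : ℕ, y * c ^ m * y⁻¹ = c ^ m * d ^ m := by
    intro m
    rw [← conj_pow, show y * c * y⁻¹ = c * d by
      rw [← (h c).eq]; simp only [d, commutatorElement_def]; group, (h c).symm.mul_pow]
  have hconj_d : ∀ m : ℕ, y * d ^ m * y⁻¹ = d ^ m := fun m => by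
    rw [← ((h y).pow_left m).eq, mul_inv_cancel_right]
  induction n with
  | zero => simp
  | succ n ih =>
    calc ⁅y ^ (n + 1), g⁆ = (y * c ^ n * y⁻¹) * (y * d ^ n.choose 2 * y⁻¹) * c := by
          rw [show y * c ^ n * y⁻¹ * (y * d ^ n.choose 2 * y⁻¹) = y * (c ^ n * d ^ n.choose 2) * y⁻¹
            by group, ← ih]
          simp only [c, commutatorElement_def]; group
      _ = c ^ n * (d ^ (n + n.choose 2) * c) := by rw [hconj_c, hconj_d, pow_add]; group
      _ = c ^ (n + 1) * d ^ (n + 1).choose 2 := by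
          rw [((h c).pow_left _).eq, Nat.choose_succ_succ' n 1, Nat.choose_one_right]; group

lemma commutatorElement_pow_left_mem {E : Subgroup Γ} [E.Normal] {y g : Γ} {n : ℕ}
    (hd : ∀ z, ⁅⁅y, ⁅y, g⁆⁆, z⁆ ∈ E) (hc : ⁅y, g⁆ ^ n ∈ E) (hd' : ⁅y, ⁅y, g⁆⁆ ^ n.choose 2 ∈ E) :
    ⁅y ^ n, g⁆ ∈ E := by
  set π := QuotientGroup.mk' E
  have hπ : ∀ x, π x = 1 ↔ x ∈ E := QuotientGroup.eq_one_iff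
  have hcen : ∀ z, Commute ⁅π y, ⁅π y, π g⁆⁆ z := fun z => by
    obtain ⟨w, rfl⟩ := QuotientGroup.mk'_surjective E z
    simpa only [← commutatorElement_eq_one_iff_commute, map_commutatorElement] using (hπ _).2 (hd w)
  rw [← hπ, map_commutatorElement, map_pow, commutatorElement_pow_left hcen]
  simp only [← map_commutatorElement, ← map_pow, (hπ _).2 hc, (hπ _).2 hd', one_mul]

lemma inv_mul_pow_mul_pow_mem {E : Subgroup Γ} [E.Normal] {a b : Γ} {n : ℕ}
    (he : ∀ z, ⁅⁅b, a⁆, z⁆ ∈ E) (he' : ⁅b, a⁆ ^ n.choose 2 ∈ E) :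
    ((a * b) ^ n)⁻¹ * (a ^ n * b ^ n) ∈ E := by
  set π := QuotientGroup.mk' E
  have hπ : ∀ x, π x = 1 ↔ x ∈ E := QuotientGroup.eq_one_iff
  have hcen : ∀ z, Commute ⁅π b, π a⁆ z := fun z => by
    obtain ⟨w, rfl⟩ := QuotientGroup.mk'_surjective E z
    simpa only [← commutatorElement_eq_one_iff_commute, map_commutatorElement] using (hπ _).2 (he w)
  rw [← hπ, map_mul, map_inv, map_pow, map_mul, mul_pow_of_commute_commutatorElement hcen]
  simp only [← map_commutatorElement, ← map_pow, (hπ _).2 he', mul_one, ← map_mul, inv_mul_cancel]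

lemma pow_choose_two_mem {p : ℕ} (hp : p.Prime) (hp2 : p ≠ 2) {K : Subgroup Γ} {x : Γ}
    (h : x ^ p ∈ K) : x ^ p.choose 2 ∈ K := by
  obtain ⟨t, ht⟩ := hp.dvd_choose_self two_ne_zero (lt_of_le_of_ne hp.two_le (Ne.symm hp2))
  rw [ht, pow_mul]
  exact pow_mem h t

end Commutators

namespace Subgroup

variable {Γ Δ : Type*} [Group Γ] [Group Δ]

def agemo (N : Subgroup Γ) (p : ℕ) : Subgroup Γ := closure ((· ^ p) '' N)

variable {N M : Subgroup Γ} {p : ℕ}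

lemma pow_mem_agemo {y : Γ} (hy : y ∈ N) : y ^ p ∈ N.agemo p :=
  subset_closure ⟨y, hy, rfl⟩

lemma agemo_le : N.agemo p ≤ N :=
  closure_le _ |>.2 <| Set.image_subset_iff.2 fun _ hy => pow_mem hy p

lemma map_agemo (f : Γ →* Δ) : (N.agemo p).map f = (N.map f).agemo p := by
  simp only [agemo, MonoidHom.map_closure, coe_map, Set.image_image, map_pow]

instance agemo_normal [N.Normal] : (N.agemo p).Normal :=
  normal_iff_map_conj_eq.2 fun g => by rw [map_agemo, ‹N.Normal›.map_conj_eq]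

lemma agemo_subgroupOf {H : Subgroup Γ} (hNH : N ≤ H) :
    (N.agemo p).subgroupOf H = (N.subgroupOf H).agemo p := by
  conv_lhs => rw [← map_subgroupOf_eq_of_le hNH, ← map_agemo]
  exact comap_map_eq_self_of_injective H.subtype_injective _

lemma commutator_top_le_iff [N.Normal] : ⁅M, ⊤⁆ ≤ N ↔ M ≤ upperCentralSeriesStep N := by
  rw [commutator_le]
  exact ⟨fun h x hx y => h x hx y trivial, fun h x hx y _ => h hx y⟩

lemma commutator_agemo_le [N.Normal] (p : ℕ) :
    ⁅N.agemo p, ⊤⁆ ≤ ⁅N, (⊤ : Subgroup Γ)⁆.agemo p ⊔ ⁅⁅N, (⊤ : Subgroup Γ)⁆, ⊤⁆ := by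
  refine commutator_top_le_iff.2 <| closure_le _ |>.2 ?_
  rintro _ ⟨y, hy, rfl⟩ g
  have hd : ⁅y, ⁅y, g⁆⁆ ∈ ⁅⁅N, (⊤ : Subgroup Γ)⁆, (⊤ : Subgroup Γ)⁆ := by
    rw [commutator_comm]
    exact commutator_mem_commutator (mem_top y) (commutator_mem_commutator hy (mem_top g))
  refine commutatorElement_pow_left_mem (fun z => mem_sup_right ?_) ?_
    (mem_sup_right (pow_mem hd _))
  · exact commutator_le_left _ _ (commutator_mem_commutator hd (mem_top z))
  · exact mem_sup_left (pow_mem_agemo (commutator_mem_commutator hy (mem_top g)))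

lemma le_of_le_sup_commutator [Group.IsNilpotent Γ] [N.Normal] (h : M ≤ N ⊔ ⁅M, ⊤⁆) : M ≤ N := by
  obtain ⟨n, hn⟩ := nilpotent_iff_lowerCentralSeries.1 ‹_›
  have key : ∀ k, M ≤ N ⊔ (⊤ : Subgroup Γ).lowerCentralSeries k := by
    intro k
    induction k with
    | zero => simp
    | succ k ih =>
      refine h.trans (sup_le le_sup_left (commutator_top_le_iff.2 (ih.trans (sup_le ?_ ?_))))
      · exact commutator_top_le_iff.1 ((commutator_le_left N ⊤).trans le_sup_left)
      · exact commutator_top_le_iff.1 (lowerCentralSeries_succ (⊤ : Subgroup Γ) k ▸ le_sup_right)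
  simpa [hn] using key n

lemma _root_.IsPGroup.agemo_top_ne_top [Finite Δ] [Nontrivial Δ] [Fact p.Prime]
    (hΔ : IsPGroup p Δ) : (⊤ : Subgroup Δ).agemo p ≠ ⊤ := by
  have hp : p.Prime := Fact.out
  obtain ⟨n, hn⟩ := hΔ.exists_card_eq
  have hn0 : n ≠ 0 := by
    rintro rfl
    exact (Finite.one_lt_card (α := Δ)).ne' (by rw [hn, pow_zero])
  obtain ⟨M, hM⟩ := Sylow.exists_subgroup_card_pow_prime p (n := n - 1)
    (hn ▸ pow_dvd_pow p (Nat.sub_le n 1))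
  have hindex : M.index = p := by
    have := M.card_mul_index
    rw [hM, hn, ← Nat.sub_add_cancel (Nat.one_le_iff_ne_zero.2 hn0), pow_succ,
      Nat.add_sub_cancel] at this
    exact Nat.eq_of_mul_eq_mul_left (pow_pos hp.pos _) this
  have : M.Normal := normal_of_index_eq_minFac_card (by rw [hindex, hn, hp.pow_minFac hn0])
  have hpow : ∀ g : Δ, g ^ p ∈ M := fun g => by
    rw [← QuotientGroup.eq_one_iff, QuotientGroup.mk_pow, ← hindex, index]
    exact pow_card_eq_one'
  have hM : M ≠ ⊤ := fun h => hp.one_lt.ne' (hindex ▸ index_eq_one.2 h)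
  exact ne_top_of_le_ne_top hM (closure_le _ |>.2 fun _ ⟨g, _, hg⟩ => hg ▸ hpow g)

lemma eq_bot_of_le_agemo [Finite Γ] [Fact p.Prime] (hΓ : IsPGroup p Γ) (h : N ≤ N.agemo p) :
    N = ⊥ := by
  by_contra hN
  have := (nontrivial_iff_ne_bot N).2 hN
  refine (hΓ.to_subgroup N).agemo_top_ne_top (eq_top_iff.2 fun x _ => ?_)
  have hx : (x : Γ) ∈ ((⊤ : Subgroup N).agemo p).map N.subtype := by
    rw [map_agemo, ← MonoidHom.range_eq_map, range_subtype]
    exact h x.2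
  exact (mem_map_iff_mem N.subtype_injective).1 hx

lemma le_of_le_sup_agemo_sup_commutator [Finite Γ] [Fact p.Prime] (hΓ : IsPGroup p Γ)
    [N.Normal] [M.Normal] (h : M ≤ N ⊔ M.agemo p ⊔ ⁅M, ⊤⁆) : M ≤ N := by
  have := hΓ.isNilpotent
  have hM : M ≤ N ⊔ M.agemo p := le_of_le_sup_commutator h
  rw [← QuotientGroup.ker_mk' N, ← map_eq_bot_iff]
  refine eq_bot_of_le_agemo (hΓ.to_quotient N) ((map_mono hM).trans ?_)
  rw [map_sup, map_agemo, (map_eq_bot_iff _).2 (QuotientGroup.ker_mk' N).ge, bot_sup_eq]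

end Subgroup

open Subgroup

def agemoSeries (Γ : Type*) [Group Γ] (p : ℕ) : ℕ → Subgroup Γ
  | 0 => ⊤
  | k + 1 => (agemoSeries Γ p k).agemo p

section agemoSeries

variable {Γ : Type*} [Group Γ] {p : ℕ}

@[simp] lemma agemoSeries_zero : agemoSeries Γ p 0 = ⊤ := rfl

instance agemoSeries_normal (k : ℕ) : (agemoSeries Γ p k).Normal := by
  induction k with
  | zero => exact normal_top
  | succ k _ => exact agemo_normal

lemma agemoSeries_antitone : Antitone (agemoSeries Γ p) :=
  antitone_nat_of_succ_le fun _ => agemo_le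

lemma pow_mem_agemoSeries_succ {k : ℕ} {y : Γ} (hy : y ∈ agemoSeries Γ p k) :
    y ^ p ∈ agemoSeries Γ p (k + 1) :=
  pow_mem_agemo hy

lemma pow_pow_mem_agemoSeries {k : ℕ} {y : Γ} (hy : y ∈ agemoSeries Γ p k) (t : ℕ) :
    y ^ p ^ t ∈ agemoSeries Γ p (k + t) := by
  induction t with
  | zero => simpa using hy
  | succ t ih => simpa [pow_succ, pow_mul, ← add_assoc] using pow_mem_agemoSeries_succ ih

lemma subgroupPow_le_agemoSeries (k : ℕ) : subgroupPow Γ (p ^ k) ≤ agemoSeries Γ p k :=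
  closure_le _ |>.2 fun _ ⟨y, hy⟩ => hy ▸ by
    simpa using pow_pow_mem_agemoSeries (p := p) (k := 0) (mem_top y) k

lemma agemoSeries_ne_bot {k : ℕ} (h : ¬ Monoid.exponent Γ ∣ p ^ k) : agemoSeries Γ p k ≠ ⊥ :=
  fun hk => h <| Monoid.exponent_dvd_of_forall_pow_eq_one fun g => by
    simpa [hk] using pow_pow_mem_agemoSeries (p := p) (k := 0) (mem_top g) k

lemma exists_agemoSeries_eq_bot [Finite Γ] [Fact p.Prime] (hΓ : IsPGroup p Γ) :
    ∃ K, agemoSeries Γ p K = ⊥ := by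
  by_contra! h
  have : StrictAnti (agemoSeries Γ p) := strictAnti_nat_of_succ_lt fun k =>
    lt_of_le_of_ne agemo_le fun hk => h k (eq_bot_of_le_agemo hΓ hk.ge)
  exact not_injective_infinite_finite _ this.injective

end agemoSeries

/-- The shift `r` with `[Γ, Γ] ≤ Γ^{p^r}` in the definition of a powerful `p`-group. -/
def powerfulDepth (p : ℕ) : ℕ := if p = 2 then 2 else 1

lemma powerfulDepth_pos (p : ℕ) : 0 < powerfulDepth p := by
  unfold powerfulDepth; split_ifs <;> norm_num

def IsPowerful (Γ : Type*) [Group Γ] (p : ℕ) : Prop :=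
  commutator Γ ≤ subgroupPow Γ (p ^ powerfulDepth p)

namespace IsPowerful

variable {Γ : Type*} [Group Γ] [Finite Γ] {p : ℕ} [Fact p.Prime]

theorem commutator_agemoSeries_le (hpow : IsPowerful Γ p) (hΓ : IsPGroup p Γ) (k : ℕ) :
    ⁅agemoSeries Γ p k, ⊤⁆ ≤ agemoSeries Γ p (k + powerfulDepth p) := by
  induction k with
  | zero => simpa [← commutator_def] using hpow.trans (subgroupPow_le_agemoSeries _)
  | succ k ih =>
    set Z := agemoSeries Γ p
    set X := ⁅Z (k + 1), (⊤ : Subgroup Γ)⁆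
    -- With `r = powerfulDepth p`: modulo `Z (k + 1 + r) ⊔ X ^ p ⊔ [X, Γ]` the generators
    -- `[y ^ p, g]` of `X` vanish by the commutator-power formula; absorption gives
    -- `X ≤ Z (k + 1 + r)`.
    refine le_of_le_sup_agemo_sup_commutator hΓ (commutator_top_le_iff.2 (closure_le _ |>.2 ?_))
    rintro _ ⟨y, hy, rfl⟩ g
    have hc : ⁅y, g⁆ ∈ Z (k + powerfulDepth p) := ih (commutator_mem_commutator hy (mem_top g))
    have hd : ⁅y, ⁅y, g⁆⁆ ∈ ⁅Z (k + powerfulDepth p), (⊤ : Subgroup Γ)⁆ := by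
      rw [commutator_comm]; exact commutator_mem_commutator (mem_top y) hc
    have hdX : ⁅y, ⁅y, g⁆⁆ ∈ X :=
      commutator_mono (agemoSeries_antitone (by have := powerfulDepth_pos p; omega)) le_rfl hd
    refine commutatorElement_pow_left_mem
      (fun z => mem_sup_right (commutator_mem_commutator hdX (mem_top z)))
      (mem_sup_left (mem_sup_left (add_right_comm k 1 _ ▸ pow_mem_agemoSeries_succ hc))) ?_
    by_cases hp2 : p = 2
    · subst hp2
      have h2 : ⁅Z (k + 2), ⊤⁆ ≤ X.agemo 2 ⊔ ⁅X, ⊤⁆ := commutator_agemo_le 2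
      apply (sup_le_sup_right le_sup_right _ : X.agemo 2 ⊔ ⁅X, ⊤⁆ ≤ _)
      simpa using h2 hd
    · exact mem_sup_left (mem_sup_right (pow_choose_two_mem Fact.out hp2 (pow_mem_agemo hdX)))

lemma commutator_agemoSeries_le_succ (hpow : IsPowerful Γ p) (hΓ : IsPGroup p Γ) (k : ℕ) :
    ⁅agemoSeries Γ p k, ⊤⁆ ≤ agemoSeries Γ p (k + 1) :=
  (hpow.commutator_agemoSeries_le hΓ k).trans
    (agemoSeries_antitone (by have := powerfulDepth_pos p; omega))

lemma inv_mul_pow_mem (hpow : IsPowerful Γ p) (hΓ : IsPGroup p Γ) {j : ℕ} {v : Γ}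
    (hv : v ∈ agemoSeries Γ p j) (z : Γ) :
    ((z * v) ^ p)⁻¹ * (z ^ p * v ^ p) ∈ agemoSeries Γ p (j + 2) := by
  have hvz : ⁅v, z⁆ ∈ agemoSeries Γ p (j + 1) :=
    hpow.commutator_agemoSeries_le_succ hΓ j (commutator_mem_commutator hv (mem_top z))
  refine inv_mul_pow_mul_pow_mem (fun w => hpow.commutator_agemoSeries_le_succ hΓ (j + 1)
    (commutator_mem_commutator hvz (mem_top w))) ?_
  by_cases hp2 : p = 2
  · subst hp2
    simpa [powerfulDepth] using
      hpow.commutator_agemoSeries_le hΓ j (commutator_mem_commutator hv (mem_top z))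
  · exact pow_choose_two_mem Fact.out hp2 (pow_mem_agemoSeries_succ hvz)

theorem exists_pow_eq_of_mem_succ (hpow : IsPowerful Γ p) (hΓ : IsPGroup p Γ) {j : ℕ} {x : Γ}
    (hx : x ∈ agemoSeries Γ p (j + 1)) : ∃ v ∈ agemoSeries Γ p j, v ^ p = x := by
  set Z := agemoSeries Γ p
  obtain ⟨K, hK⟩ := exists_agemoSeries_eq_bot hΓ
  -- Downward induction on `i`, which stops at `Z K = ⊥`: a generator `u ^ p` of `Z i` is absorbed
  -- through `z ^ p * u ^ p = (z * u) ^ p * w` with `w ∈ Z (i + 1)`.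
  suffices key : ∀ n i, K ≤ i + n → j < i → ∀ w ∈ Z i, ∀ z ∈ Z j, ∃ v ∈ Z j, v ^ p = z ^ p * w by
    simpa using key K (j + 1) (by omega) (by omega) x hx 1 (one_mem _)
  intro n
  induction n with
  | zero =>
    intro i hKi _ w hw z hz
    have hw1 : w = 1 := by simpa [hK] using agemoSeries_antitone hKi hw
    exact ⟨z, hz, by simp [hw1]⟩
  | succ n ih =>
    intro i hKi hji w hw
    obtain ⟨i, rfl⟩ : ∃ i', i = i' + 1 := ⟨i - 1, by omega⟩
    have step : ∀ u ∈ Z i, ∀ w : Γ, (∀ z ∈ Z j, ∃ v ∈ Z j, v ^ p = z ^ p * w) →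
        ∀ z ∈ Z j, ∃ v ∈ Z j, v ^ p = z ^ p * (w * u ^ p) := by
      intro u hu w hw z hz
      obtain ⟨v, hv, hvw⟩ := hw z hz
      obtain ⟨v', hv', hv'eq⟩ := ih (i + 2) (by omega) (by omega) _ (hpow.inv_mul_pow_mem hΓ hu v)
        (v * u) (mul_mem hv (agemoSeries_antitone (by omega) hu))
      exact ⟨v', hv', by rw [hv'eq, mul_inv_cancel_left, hvw, mul_assoc]⟩
    induction hw using closure_induction_right with
    | one => exact fun z hz => ⟨z, hz, by simp⟩
    | mul_right w _ s hs ihw =>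
      obtain ⟨u, hu, rfl⟩ := hs
      exact step u hu w ihw
    | mul_inv_cancel w _ s hs ihw =>
      obtain ⟨u, hu, rfl⟩ := hs
      rw [← inv_pow]
      exact step u⁻¹ (inv_mem hu) w ihw

theorem exists_pow_pow_eq_of_mem (hpow : IsPowerful Γ p) (hΓ : IsPGroup p Γ) {k : ℕ} {x : Γ}
    (hx : x ∈ agemoSeries Γ p k) : ∃ y : Γ, y ^ p ^ k = x := by
  induction k generalizing x with
  | zero => exact ⟨x, by simp⟩
  | succ k ih =>
    obtain ⟨v, hv, rfl⟩ := hpow.exists_pow_eq_of_mem_succ hΓ hx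
    obtain ⟨y, rfl⟩ := ih hv
    exact ⟨y, by rw [← pow_mul, pow_succ]⟩

theorem agemoSeries_eq_subgroupPow (hpow : IsPowerful Γ p) (hΓ : IsPGroup p Γ) (k : ℕ) :
    agemoSeries Γ p k = subgroupPow Γ (p ^ k) := by
  refine le_antisymm (fun x hx => ?_) (subgroupPow_le_agemoSeries k)
  obtain ⟨y, rfl⟩ := hpow.exists_pow_pow_eq_of_mem hΓ hx
  exact subset_closure ⟨y, rfl⟩

/-- The `p`-power map `Z k / Z (k + 1) → Z (k + 1) / Z (k + 2)` is a surjective homomorphism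
between groups of the same order, hence injective. -/
theorem mem_agemoSeries_succ_of_pow_mem (hpow : IsPowerful Γ p) (hΓ : IsPGroup p Γ) {k : ℕ}
    (hcard : (agemoSeries Γ p (k + 2)).relIndex (agemoSeries Γ p (k + 1)) =
      (agemoSeries Γ p (k + 1)).relIndex (agemoSeries Γ p k))
    {x : Γ} (hx : x ∈ agemoSeries Γ p k) (hxp : x ^ p ∈ agemoSeries Γ p (k + 2)) :
    x ∈ agemoSeries Γ p (k + 1) := by
  set Z := agemoSeries Γ p
  set A := (Z (k + 1)).subgroupOf (Z k)
  set B := (Z (k + 2)).subgroupOf (Z (k + 1))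
  let f : Z k →* Z (k + 1) ⧸ B :=
    MonoidHom.mk' (fun a => ((⟨a ^ p, pow_mem_agemoSeries_succ a.2⟩ : Z (k + 1)) : Z (k + 1) ⧸ B))
      fun a b => by
        rw [← QuotientGroup.mk_mul, QuotientGroup.eq, mem_subgroupOf]
        exact hpow.inv_mul_pow_mem hΓ b.2 a
  have hf : ∀ a, f a = 1 ↔ (a : Γ) ^ p ∈ Z (k + 2) := fun a =>
    (QuotientGroup.eq_one_iff _).trans mem_subgroupOf
  have hsurj : Function.Surjective f := fun t => by
    obtain ⟨q, rfl⟩ := QuotientGroup.mk_surjective t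
    obtain ⟨v, hv, hvq⟩ := hpow.exists_pow_eq_of_mem_succ hΓ q.2
    exact ⟨⟨v, hv⟩, congrArg ((↑) : Z (k + 1) → Z (k + 1) ⧸ B) (Subtype.ext hvq)⟩
  have hle : A ≤ f.ker := fun a ha => (hf a).2 (pow_mem_agemoSeries_succ ha)
  have hindex : f.ker.index = A.index := by
    rw [index_ker, MonoidHom.range_eq_top.2 hsurj, card_top, ← index_eq_card]
    exact hcard
  have hker : f.ker ≤ A := by
    have h := relIndex_mul_index hle
    rw [hindex] at h
    exact relIndex_eq_one.1 ((Nat.mul_eq_right A.index_ne_zero_of_finite).1 h)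
  exact hker ((hf ⟨x, hx⟩).2 hxp)

end IsPowerful

def IsUniform (Γ : Type*) [Group Γ] (p : ℕ) : Prop :=
  IsPowerful Γ p ∧ ∀ i : ℕ, subgroupPow Γ (p ^ i) ≠ ⊥ →
    (subgroupPow Γ (p ^ (i + 1))).relIndex (subgroupPow Γ (p ^ i)) = (subgroupPow Γ p).index

namespace IsUniform

variable {Γ : Type*} [Group Γ] [Finite Γ] {p : ℕ} [Fact p.Prime]

lemma relIndex_agemoSeries_eq (hU : IsUniform Γ p) (hΓ : IsPGroup p Γ) {k : ℕ}
    (hk : agemoSeries Γ p (k + 1) ≠ ⊥) :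
    (agemoSeries Γ p (k + 2)).relIndex (agemoSeries Γ p (k + 1)) =
      (agemoSeries Γ p (k + 1)).relIndex (agemoSeries Γ p k) := by
  have hk' : agemoSeries Γ p k ≠ ⊥ := ne_bot_of_le_ne_bot hk (agemoSeries_antitone (by omega))
  simp only [hU.1.agemoSeries_eq_subgroupPow hΓ] at hk hk' ⊢
  rw [hU.2 _ hk, hU.2 _ hk']

theorem mem_agemoSeries_succ_of_pow_pow_mem (hU : IsUniform Γ p) (hΓ : IsPGroup p Γ)
    {k t : ℕ} {x : Γ} (hx : x ∈ agemoSeries Γ p k) (hxt : x ^ p ^ t ∈ agemoSeries Γ p (k + t + 1))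
    (hne : agemoSeries Γ p (k + t) ≠ ⊥) : x ∈ agemoSeries Γ p (k + 1) := by
  induction t generalizing x k with
  | zero => simpa using hxt
  | succ t ih =>
    have hxp : x ^ p ∈ agemoSeries Γ p (k + 2) := by
      refine ih (pow_mem_agemoSeries_succ hx) ?_ (by rwa [add_right_comm])
      rwa [← pow_mul, ← pow_succ', add_right_comm k 1 t]
    exact hU.1.mem_agemoSeries_succ_of_pow_mem hΓ
      (hU.relIndex_agemoSeries_eq hΓ (ne_bot_of_le_ne_bot hne (agemoSeries_antitone (by omega))))
      hx hxp

theorem exists_pow_eq_of_pow_eq_one (hU : IsUniform Γ p) (hΓ : IsPGroup p Γ) {c s : ℕ}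
    (hexp : Monoid.exponent Γ = p ^ (c + (s + 1))) {v : Γ} (hv : v ^ p ^ (s + 1) = 1) :
    ∃ w : Γ, w ^ p ^ c = v := by
  have hne : agemoSeries Γ p (c + s) ≠ ⊥ := agemoSeries_ne_bot <| by
    rw [hexp, Nat.pow_dvd_pow_iff_le_right (Fact.out : p.Prime).one_lt]
    omega
  have hmem : ∀ j ≤ c, v ∈ agemoSeries Γ p j := by
    intro j hj
    induction j with
    | zero => exact mem_top v
    | succ j ih =>
      refine hU.mem_agemoSeries_succ_of_pow_pow_mem hΓ (ih (by omega)) (hv ▸ one_mem _)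
        (ne_bot_of_le_ne_bot hne (agemoSeries_antitone (by omega)))
  exact hU.1.exists_pow_pow_eq_of_mem hΓ (hmem c le_rfl)

end IsUniform

/-- By `hroot`, the subgroup generated by the `exp (G ⧸ U)`-th powers of `U` is `φ`-invariant,
hence trivial. -/
theorem IsSimpleVirtualEndo.exponent_dvd {G : Type*} [Group G] {H : Subgroup G} {φ : H →* G}
    (hφ : IsSimpleVirtualEndo H φ) {U : Subgroup G} [U.Normal] (hUH : U ≤ H) {b : ℕ}
    (hb : Monoid.exponent U ∣ Monoid.exponent (G ⧸ U) * b)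
    (hroot : ∀ v : U, v ^ b = 1 → ∃ w : U, w ^ Monoid.exponent (G ⧸ U) = v) :
    Monoid.exponent U ∣ Monoid.exponent (G ⧸ U) := by
  set e := Monoid.exponent (G ⧸ U)
  have hK : U.agemo e = ⊥ := by
    refine hφ _ (agemo_le.trans hUH) inferInstance ?_
    rw [agemo_subgroupOf hUH, map_agemo]
    refine closure_le _ |>.2 ?_
    rintro _ ⟨_, ⟨u, hu, rfl⟩, rfl⟩
    have hv : φ u ^ e ∈ U := by
      rw [← QuotientGroup.eq_one_iff, QuotientGroup.mk_pow]
      exact Monoid.pow_exponent_eq_one _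
    have hu1 : u ^ (e * b) = 1 := Subtype.ext <| by
      simpa using congrArg Subtype.val
        (Monoid.exponent_dvd_iff_forall_pow_eq_one.1 hb (⟨u, hu⟩ : U))
    obtain ⟨w, hw⟩ := hroot ⟨_, hv⟩ <| Subtype.ext <| by
      simp only [SubmonoidClass.mk_pow, ← pow_mul, ← map_pow, hu1, map_one, OneMemClass.coe_one]
    exact subset_closure ⟨w, w.2, congrArg Subtype.val hw⟩
  refine Monoid.exponent_dvd_of_forall_pow_eq_one fun u => Subtype.ext ?_
  simpa [hK] using pow_mem_agemo (p := e) u.2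

theorem stmt19_general {p : ℕ} (hp : p.Prime) {G : Type} [Group G] [Finite G]
    (hG : IsPGroup p G)
    (H : Subgroup G)
    (φ : H →* G) (hφ : IsSimpleVirtualEndo H φ)
    (U : Subgroup G) [hUn : U.Normal] (hUH : U ≤ H)
    -- `U` is powerful
    (hpowerful : commutator U ≤ subgroupPow U (if p = 2 then 4 else p))
    -- `U` is uniform: the quotients `U^{p^i}/U^{p^{i+1}}` all have the same order,
    -- down to the trivial group
    (huniform : ∀ i : ℕ, subgroupPow U (p ^ i) ≠ ⊥ →
      (subgroupPow U (p ^ (i + 1))).relIndex (subgroupPow U (p ^ i)) =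
        (subgroupPow U p).index) :
    (p ≠ 2 → Monoid.exponent U ≤ Monoid.exponent (G ⧸ U)) ∧
    (p = 2 → Monoid.exponent U ≤ 4 * Monoid.exponent (G ⧸ U)) := by
  have := Fact.mk hp
  have hU : IsPGroup p U := hG.to_subgroup U
  have hUuni : IsUniform U p := by
    refine ⟨?_, huniform⟩
    unfold IsPowerful powerfulDepth
    split_ifs at hpowerful ⊢ with hp2
    · simpa [hp2] using hpowerful
    · simpa using hpowerful
  obtain ⟨m, hm⟩ := hU.exists_exponent_eq_pow
  obtain ⟨c, hc⟩ := (hG.to_quotient U).exists_exponent_eq_pow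
  have key : Monoid.exponent U ≤ Monoid.exponent (G ⧸ U) := by
    refine Nat.le_of_dvd (by rw [hc]; exact pow_pos hp.pos c) ?_
    rcases le_or_gt m c with hmc | hcm
    · rw [hm, hc]
      exact pow_dvd_pow p hmc
    · obtain ⟨s, rfl⟩ : ∃ s, m = c + (s + 1) := ⟨m - c - 1, by omega⟩
      refine hφ.exponent_dvd hUH (b := p ^ (s + 1)) (by rw [hm, hc, pow_add]) fun v hv => ?_
      rw [hc]
      exact hUuni.exists_pow_eq_of_pow_eq_one hU hm hv
  exact ⟨fun _ => key, fun _ => key.trans (Nat.le_mul_of_pos_left _ (by norm_num))⟩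

theorem stmt19 {p : ℕ} (hp : p.Prime) {G : Type} [Group G] [Finite G]
    (hG : IsPGroup p G)
    (H : Subgroup G) (hHmax : H.index = p)
    (φ : H →* G) (hφ : IsSimpleVirtualEndo H φ)
    (U : Subgroup G) [hUn : U.Normal] (hUH : U ≤ H) (hUnt : U ≠ ⊥)
    -- `U` is powerful
    (hpowerful : commutator U ≤ subgroupPow U (if p = 2 then 4 else p))
    -- `U` is uniform: the quotients `U^{p^i}/U^{p^{i+1}}` all have the same order,
    -- down to the trivial group
    (huniform : ∀ i : ℕ, subgroupPow U (p ^ i) ≠ ⊥ →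
      (subgroupPow U (p ^ (i + 1))).relIndex (subgroupPow U (p ^ i)) =
        (subgroupPow U p).index) :
    (p ≠ 2 → Monoid.exponent U ≤ Monoid.exponent (G ⧸ U)) ∧
    (p = 2 → Monoid.exponent U ≤ 4 * Monoid.exponent (G ⧸ U)) :=
  stmt19_general hp hG H φ hφ U (hUn := hUn) hUH hpowerful huniform
end
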